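/- arXiv:1904.09282 — 9 statements merged into one kernel-verified Lean document; each statement's English description precedes it below -/
import Mathlib

section
/- Let t ∈ (0,2) and let κ : ℝ → ℝ be a differentiable function such that exp(i·κ(α)) = (exp(i·μ_t) − exp(α))/(exp(i·μ_t + α) − 1) for all α ∈ ℝ. Then for all α ∈ ℝ, κ'(α) = sin(μ_t)/(cosh(α) − cos(μ_t)). -/
open Matrix Complex Finset

noncomputable section

/-- `Δ_t = (2 - t²)/2`. -/
def Del (t : ℝ) : ℝ := (2 - t ^ 2) / 2

/-- `μ_t ∈ (0, π)` is the unique angle with `cos μ_t = -Δ_t`. -/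
def mu (t : ℝ) : ℝ := Real.arccos (-(Del t))

/-- The local matrix function with parameters `(a, b, c)`. -/
def localR (a b c : ℂ) : Fin 2 → Fin 2 → Matrix (Fin 2) (Fin 2) ℂ := fun u v =>
  if u = 0 ∧ v = 0 then !![a, 0; 0, b]
  else if u = 1 ∧ v = 1 then !![b, 0; 0, a]
  else if u = 0 ∧ v = 1 then !![0, 0; c, 0]
  else !![0, c; 0, 0]

/-- The north-east matrix associated to the local matrix function with
parameters `(a, b, c)`: rows `(a,0,0,0), (0,c,b,0), (0,b,c,0), (0,0,0,a)`,
indices ordered `(0,0), (0,1), (1,0), (1,1)`. -/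
def northEast (a b c : ℂ) : Matrix (Fin 2 × Fin 2) (Fin 2 × Fin 2) ℂ := fun p q =>
  if (p = (0, 0) ∧ q = (0, 0)) ∨ (p = (1, 1) ∧ q = (1, 1)) then a
  else if (p = (0, 1) ∧ q = (0, 1)) ∨ (p = (1, 0) ∧ q = (1, 0)) then c
  else if (p = (0, 1) ∧ q = (1, 0)) ∨ (p = (1, 0) ∧ q = (0, 1)) then b
  else 0

/-- The monodromy matrix `M_N(u,v) = R(u₁,v₁) ⋯ R(u_N,v_N)`. -/
def monodromy {N : ℕ} (R : Fin 2 → Fin 2 → Matrix (Fin 2) (Fin 2) ℂ)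
    (u v : Fin N → Fin 2) : Matrix (Fin 2) (Fin 2) ℂ :=
  ((List.finRange N).map fun k => R (u k) (v k)).prod

/-- The transfer matrix of `R`: entries are traces of monodromy matrices. -/
def transfer (N : ℕ) (R : Fin 2 → Fin 2 → Matrix (Fin 2) (Fin 2) ℂ) :
    Matrix (Fin N → Fin 2) (Fin N → Fin 2) ℂ := fun u v => (monodromy R u v).trace

/-- `(R'∘R)(s,v) = Σ_u R(s,u) ⊗ R'(u,v)` (Kronecker product). -/
def comp (Rp R : Fin 2 → Fin 2 → Matrix (Fin 2) (Fin 2) ℂ) (s v : Fin 2) :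
    Matrix (Fin 2 × Fin 2) (Fin 2 × Fin 2) ℂ :=
  ∑ u : Fin 2, Matrix.kroneckerMap (· * ·) (R s u) (Rp u v)

/-- `Q` satisfies the Yang–Baxter equation with `(R, R')`. -/
def YBE (R Rp : Fin 2 → Fin 2 → Matrix (Fin 2) (Fin 2) ℂ)
    (Q : Matrix (Fin 2 × Fin 2) (Fin 2 × Fin 2) ℂ) : Prop :=
  ∀ s v : Fin 2, comp Rp R s v * Q = Q * comp R Rp s v

/-- `A_N[u,v] = M_N(u,v)[0,0]`. -/
def AmatOf {N : ℕ} (R : Fin 2 → Fin 2 → Matrix (Fin 2) (Fin 2) ℂ) :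
    Matrix (Fin N → Fin 2) (Fin N → Fin 2) ℂ := fun u v => monodromy R u v 0 0

/-- `B_N[u,v] = M_N(u,v)[1,0]`. -/
def BmatOf {N : ℕ} (R : Fin 2 → Fin 2 → Matrix (Fin 2) (Fin 2) ℂ) :
    Matrix (Fin N → Fin 2) (Fin N → Fin 2) ℂ := fun u v => monodromy R u v 1 0

/-- `D_N[u,v] = M_N(u,v)[1,1]`. -/
def DmatOf {N : ℕ} (R : Fin 2 → Fin 2 → Matrix (Fin 2) (Fin 2) ℂ) :
    Matrix (Fin N → Fin 2) (Fin N → Fin 2) ℂ := fun u v => monodromy R u v 1 1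

/-- The vacuum vector `ν_N = |0⋯0⟩`. -/
def nuVec (N : ℕ) : (Fin N → Fin 2) → ℂ := fun u => if u = (fun _ => 0) then 1 else 0

/-- The path of local matrix functions with parameters `(a(x), b(x), c(x))`. -/
def Rpath (a b c : ℂ → ℂ) (x : ℂ) : Fin 2 → Fin 2 → Matrix (Fin 2) (Fin 2) ℂ :=
  localR (a x) (b x) (c x)

/-- `λ(x,y) = a(δ(x,y))/b(δ(x,y))`. -/
def lam (a b : ℂ → ℂ) (d : ℂ → ℂ → ℂ) (x y : ℂ) : ℂ := a (d x y) / b (d x y)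

/-- `μ(x,y) = -c(δ(x,y))/b(δ(x,y))`. -/
def muc (b c : ℂ → ℂ) (d : ℂ → ℂ → ℂ) (x y : ℂ) : ℂ := -(c (d x y) / b (d x y))

/-- The abstract Yang–Baxter path setting. -/
def Setting (a b c : ℂ → ℂ) (d : ℂ → ℂ → ℂ) : Prop :=
  (∀ x, a x * b x ≠ 0) ∧
  (∀ x y, YBE (Rpath a b c x) (Rpath a b c y)
      (northEast (a (d x y)) (b (d x y)) (c (d x y)))) ∧
  (∀ x y, b (d x y) = 0 ↔ b (d y x) = 0) ∧
  (∀ x y z, d (d x y) (d x z) = d y z) ∧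
  (∀ x y, b (d x y) ≠ 0 → c (d x y) / b (d x y) = -(c (d y x) / b (d y x)))

/-- Ordered product `B_N(x₁) ⋯ B_N(x_n)`. -/
def prodB (a b c : ℂ → ℂ) (N n : ℕ) (xs : Fin n → ℂ) :
    Matrix (Fin N → Fin 2) (Fin N → Fin 2) ℂ :=
  ((List.finRange n).map fun k => BmatOf (N := N) (Rpath a b c (xs k))).prod

/-- Ordered product `∏_{k ≠ j} B_N(x_k)`. -/
def prodBex (a b c : ℂ → ℂ) (N n : ℕ) (xs : Fin n → ℂ) (j : Fin n) :
    Matrix (Fin N → Fin 2) (Fin N → Fin 2) ℂ :=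
  (((List.finRange n).filter fun k => k ≠ j).map fun k =>
    BmatOf (N := N) (Rpath a b c (xs k))).prod

/-- The coordinate Bethe ansatz vector `ψ_{t,n,N}(p₁,…,p_n)`. -/
def psiVec (t : ℝ) (n N : ℕ) (p : Fin n → ℝ) : (Fin N → Fin 2) → ℂ := fun ε =>
  if h : (Finset.univ.filter fun j => ε j = 1).card = n then
    ∑ σ : Equiv.Perm (Fin n),
      ((Equiv.Perm.sign σ : ℤ) : ℂ) *
      (∏ k : Fin n, ∏ l : Fin n,
        if k < l then
          Complex.exp (Complex.I * (p (σ k) : ℂ)) *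
            (Complex.exp (-(Complex.I * (p (σ k) : ℂ))) +
              Complex.exp (Complex.I * (p (σ l) : ℂ)) - 2 * (Del t : ℂ))
        else 1) *
      ∏ k : Fin n,
        Complex.exp (Complex.I * (p (σ k) : ℂ) *
          ((((Finset.univ.filter fun j => ε j = 1).orderIsoOfFin h k).1.val : ℂ) + 1))
  else 0

/-- `L_t(z) = 1 + t² z/(1-z)`. -/
def Lf (t : ℝ) (z : ℂ) : ℂ := 1 + (t : ℂ) ^ 2 * z / (1 - z)

/-- `M_t(z) = 1 - t²/(1-z)`. -/
def Mf (t : ℝ) (z : ℂ) : ℂ := 1 - (t : ℂ) ^ 2 / (1 - z)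

/-- `α` is an admissible parameter for `p`. -/
def Admissible (t p α : ℝ) : Prop :=
  Complex.exp (Complex.I * (p : ℂ)) =
    (Complex.exp (Complex.I * (mu t : ℂ)) - Complex.exp (α : ℂ)) /
      (Complex.exp (Complex.I * (mu t : ℂ) + (α : ℂ)) - 1)

/-- `(p₁,…,p_n)` satisfies the exponential Bethe equations for `(t,n,N)`. -/
def BetheExp (t : ℝ) (n N : ℕ) (p : Fin n → ℝ) : Prop :=
  (∀ j k : Fin n,
    Complex.exp (-(Complex.I * (p k : ℂ))) + Complex.exp (Complex.I * (p j : ℂ)) -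
      2 * (Del t : ℂ) ≠ 0) ∧
  ∀ j : Fin n, Complex.exp (Complex.I * (N : ℂ) * (p j : ℂ)) =
    (-1) ^ (n + 1) * ∏ k : Fin n,
      Complex.exp (Complex.I * ((p j : ℂ) - (p k : ℂ))) *
        (Complex.exp (-(Complex.I * (p j : ℂ))) + Complex.exp (Complex.I * (p k : ℂ)) -
          2 * (Del t : ℂ)) /
        (Complex.exp (-(Complex.I * (p k : ℂ))) + Complex.exp (Complex.I * (p j : ℂ)) -
          2 * (Del t : ℂ))

/-- `a` coefficient of the trigonometric solution: `sin(γ-x)/sin(γ/2)`. -/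
def aG (γ : ℝ) (x : ℂ) : ℂ := Complex.sin ((γ : ℂ) - x) / Complex.sin ((γ : ℂ) / 2)

/-- `b` coefficient of the trigonometric solution: `sin(x)/sin(γ/2)`. -/
def bG (γ : ℝ) (x : ℂ) : ℂ := Complex.sin x / Complex.sin ((γ : ℂ) / 2)

/-- `c` coefficient of the trigonometric solution: `sin(γ)/sin(γ/2)`. -/
def cG (γ : ℝ) : ℂ := Complex.sin (γ : ℂ) / Complex.sin ((γ : ℂ) / 2)

/-- The trigonometric local matrix function `R_γ^x`. -/
def Rg (γ : ℝ) (x : ℂ) : Fin 2 → Fin 2 → Matrix (Fin 2) (Fin 2) ℂ :=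
  localR (aG γ x) (bG γ x) (cG γ)

/-- Annihilation-type one-site matrix `[[0,0],[1,0]]`. -/
def annM : Matrix (Fin 2) (Fin 2) ℂ := !![0, 0; 1, 0]

/-- Creation-type one-site matrix `[[0,1],[0,0]]`. -/
def creM : Matrix (Fin 2) (Fin 2) ℂ := !![0, 1; 0, 0]

/-- Operator acting as `M` on the `j`-th tensor factor and as identity elsewhere. -/
def siteOp (N : ℕ) (M : Matrix (Fin 2) (Fin 2) ℂ) (j : Fin N) :
    Matrix (Fin N → Fin 2) (Fin N → Fin 2) ℂ := fun ε η =>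
  M (ε j) (η j) * ∏ i ∈ Finset.univ.erase j, (if ε i = η i then (1 : ℂ) else 0)

/-- Cyclic successor on `Fin N`. -/
def cyc {N : ℕ} (i : Fin N) : Fin N := ⟨(i.val + 1) % N, Nat.mod_lt _ i.pos⟩

/-- The diagonal part `D_t` of the Hamiltonian. -/
def diagD (t : ℝ) (N : ℕ) : Matrix (Fin N → Fin 2) (Fin N → Fin 2) ℂ := fun ε η =>
  if ε = η then
    (Del t : ℂ) * ((Finset.univ.filter fun i : Fin N => ε i = ε (cyc i)).card : ℂ)
  else 0

/-- The Heisenberg Hamiltonian `H_N(t)`. -/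
def Ham (t : ℝ) (N : ℕ) : Matrix (Fin N → Fin 2) (Fin N → Fin 2) ℂ :=
  (∑ j : Fin N,
    (siteOp N creM j * siteOp N annM (cyc j) + siteOp N annM j * siteOp N creM (cyc j))) +
  diagD t N

/-- The system (S) of equations on parameter triples. -/
def SystemS (a b c a' b' c' a'' b'' c'' : ℂ) : Prop :=
  a' * c * a'' = b' * c * b'' + c' * a * c'' ∧
  a' * b * c'' = b' * a * c'' + c * c' * b'' ∧
  c' * b * a'' = c' * a * b'' + b' * c * c''

end

theorem kappa_deriv (t : ℝ) (ht : t ∈ Set.Ioo (0 : ℝ) 2) (κ : ℝ → ℝ)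
    (hdiff : Differentiable ℝ κ)
    (hκ : ∀ α : ℝ, Complex.exp (Complex.I * (κ α : ℂ)) =
      (Complex.exp (Complex.I * (mu t : ℂ)) - Complex.exp (α : ℂ)) /
        (Complex.exp (Complex.I * (mu t : ℂ) + (α : ℂ)) - 1)) :
    ∀ α : ℝ, deriv κ α = Real.sin (mu t) / (Real.cosh α - Real.cos (mu t)) := by
  obtain ⟨ht0, ht2⟩ := ht
  have hD1 : -1 < -(Del t) := by unfold Del; nlinarith
  have hD2 : -(Del t) < 1 := by unfold Del; nlinarith
  have hcos : Real.cos (mu t) = -(Del t) := Real.cos_arccos (le_of_lt hD1) (le_of_lt hD2)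
  have hsin : 0 < Real.sin (mu t) := by
    rw [mu, Real.sin_arccos]
    have : (-(Del t)) ^ 2 < 1 := by nlinarith
    exact Real.sqrt_pos.mpr (by linarith)
  intro α
  set μ : ℝ := mu t with hμ
  set w : ℂ := Complex.exp (Complex.I * (μ : ℂ)) with hw
  set x : ℂ := Complex.exp ((α : ℂ)) with hx
  have hwim : w.im = Real.sin μ := by
    rw [hw, mul_comm, Complex.exp_ofReal_mul_I_im]
  have hwre : w.re = Real.cos μ := by
    rw [hw, mul_comm, Complex.exp_ofReal_mul_I_re]
  have hxval : x = ((Real.exp α : ℝ) : ℂ) := by rw [hx, Complex.ofReal_exp]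
  have hxpos : (0:ℝ) < Real.exp α := Real.exp_pos α
  have hd : w * x - 1 ≠ 0 := by
    intro h
    have him := congrArg Complex.im h
    simp [Complex.mul_im, hxval, hwim] at him
    rcases him with h1 | h2
    · exact (ne_of_gt hsin) h1
    · exact (ne_of_gt hxpos) h2
  have hn : w - x ≠ 0 := by
    intro h
    have him := congrArg Complex.im h
    simp [Complex.sub_im, hxval, hwim] at him
    exact (ne_of_gt hsin) him
  have hexpadd : Complex.exp (Complex.I * (μ : ℂ) + (α : ℂ)) = w * x := by
    rw [Complex.exp_add, hw, hx]
  -- derivative of LHS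
  have hk : HasDerivAt κ (deriv κ α) α := (hdiff α).hasDerivAt
  have hF : HasDerivAt (fun a : ℝ => Complex.exp (Complex.I * ((κ a : ℝ) : ℂ)))
      (Complex.exp (Complex.I * ((κ α : ℝ) : ℂ)) * (Complex.I * ((deriv κ α : ℝ) : ℂ))) α := by
    exact (((hk.ofReal_comp).const_mul Complex.I)).cexp
  -- derivative of RHS
  have hNum : HasDerivAt (fun a : ℝ => Complex.exp (Complex.I * (μ : ℂ)) - Complex.exp ((a : ℂ)))
      (-x) α := by
    have h1 : HasDerivAt (fun a : ℝ => Complex.exp ((a : ℂ))) x α := by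
      have := ((hasDerivAt_id α).ofReal_comp).cexp
      simpa using this
    have := (hasDerivAt_const α (Complex.exp (Complex.I * (μ : ℂ)))).sub h1
    rwa [zero_sub] at this
  have hDen : HasDerivAt (fun a : ℝ => Complex.exp (Complex.I * (μ : ℂ) + (a : ℂ)) - 1)
      (w * x) α := by
    have h1 : HasDerivAt (fun a : ℝ => Complex.exp (Complex.I * (μ : ℂ) + (a : ℂ))) (w * x) α := by
      have h0 : HasDerivAt (fun a : ℝ => Complex.I * (μ : ℂ) + (a : ℂ)) 1 α := by
        exact ((hasDerivAt_const α (Complex.I * (μ : ℂ))).add ((hasDerivAt_id α).ofReal_comp)).congr_deriv (by simp)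
      have := h0.cexp
      simpa [hexpadd] using this
    have := h1.sub (hasDerivAt_const α (1:ℂ))
    rwa [sub_zero] at this
  have hG : HasDerivAt (fun a : ℝ =>
      (Complex.exp (Complex.I * (μ : ℂ)) - Complex.exp ((a : ℂ))) /
        (Complex.exp (Complex.I * (μ : ℂ) + (a : ℂ)) - 1))
      (((-x) * (w * x - 1) - (w - x) * (w * x)) / (w * x - 1) ^ 2) α := by
    have := hNum.div hDen (by rw [hexpadd]; exact hd)
    exact this.congr_deriv (by simp only [hexpadd, hw, hx])
  have hFG : (fun a : ℝ => Complex.exp (Complex.I * ((κ a : ℝ) : ℂ))) =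
      (fun a : ℝ => (Complex.exp (Complex.I * (μ : ℂ)) - Complex.exp ((a : ℂ))) /
        (Complex.exp (Complex.I * (μ : ℂ) + (a : ℂ)) - 1)) := funext hκ
  have hF' : HasDerivAt (fun a : ℝ => Complex.exp (Complex.I * ((κ a : ℝ) : ℂ)))
      (((-x) * (w * x - 1) - (w - x) * (w * x)) / (w * x - 1) ^ 2) α := by
    rw [hFG]; exact hG
  have huniq := hF.unique hF'
  have hval : Complex.exp (Complex.I * ((κ α : ℝ) : ℂ)) = (w - x) / (w * x - 1) := by
    rw [hκ α, hexpadd, hw, hx]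
  rw [hval] at huniq
  -- key polynomial equation
  have hkey : Complex.I * ((deriv κ α : ℝ) : ℂ) * ((w - x) * (w * x - 1)) = x * (1 - w ^ 2) := by
    have h := huniq
    field_simp at h
    apply mul_right_cancel₀ hd
    linear_combination (w * x - 1) * h
  have hw0 : w ≠ 0 := Complex.exp_ne_zero _
  have hx0 : x ≠ 0 := Complex.exp_ne_zero _
  have hch : Real.cosh α - Real.cos μ ≠ 0 := by
    have h1 : (1:ℝ) ≤ Real.cosh α := Real.one_le_cosh α
    have h2 : Real.cos μ < 1 := by rw [hμ, hcos]; linarith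
    intro h; linarith
  have hwinv : w⁻¹ = ((Real.cos μ : ℝ) : ℂ) - ((Real.sin μ : ℝ) : ℂ) * Complex.I := by
    rw [hw, mul_comm, ← Complex.exp_neg]
    have h2 : -((μ:ℂ) * Complex.I) = ((-μ : ℝ) : ℂ) * Complex.I := by push_cast; ring
    rw [h2, Complex.exp_mul_I, ← Complex.ofReal_cos, ← Complex.ofReal_sin]
    simp [Real.cos_neg, Real.sin_neg, sub_eq_add_neg]
  have hwexp : w = ((Real.cos μ : ℝ) : ℂ) + ((Real.sin μ : ℝ) : ℂ) * Complex.I := by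
    rw [hw, mul_comm, Complex.exp_mul_I, ← Complex.ofReal_cos, ← Complex.ofReal_sin]
  have hs : ((Real.sin μ : ℝ) : ℂ) = (w⁻¹ - w) * Complex.I / 2 := by
    rw [hwinv, hwexp]
    linear_combination ((Real.sin μ : ℝ) : ℂ) * Complex.I_sq
  have hc : ((Real.cos μ : ℝ) : ℂ) = (w + w⁻¹) / 2 := by
    rw [hwinv, hwexp]; ring
  have hcc : ((Real.cosh α : ℝ) : ℂ) = (x + x⁻¹) / 2 := by
    rw [hx, ← Complex.exp_neg, ← Complex.ofReal_neg, ← Complex.ofReal_exp, ← Complex.ofReal_exp]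
    push_cast [Real.cosh_eq]
    ring
  have hdne : (x + x⁻¹) / 2 - (w + w⁻¹) / 2 ≠ 0 := by
    have h3 : (x + x⁻¹) / 2 - (w + w⁻¹) / 2 = ((Real.cosh α - Real.cos μ : ℝ) : ℂ) := by
      rw [Complex.ofReal_sub, hcc, hc]
    rw [h3]
    exact_mod_cast hch
  have hfinal : ((deriv κ α : ℝ) : ℂ) = ((Real.sin μ / (Real.cosh α - Real.cos μ) : ℝ) : ℂ) := by
    rw [Complex.ofReal_div, Complex.ofReal_sub, hs, hc, hcc,
      eq_div_iff hdne]
    field_simp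
    linear_combination Complex.I * hkey - ((deriv κ α : ℝ) : ℂ) * (w - x) * (w * x - 1) * Complex.I_sq
  exact_mod_cast hfinal
end

section
/- Let t ∈ (0,2) and let κ : ℝ → ℝ be a differentiable function such that exp(i·κ(α)) = (exp(i·μ_t) − exp(α))/(exp(i·μ_t + α) − 1) for all α ∈ ℝ. Then for all α ∈ ℝ, κ'(α) = (cos(κ(α)) + cos(μ_t))/sin(μ_t). -/
open Matrix Complex Finset

theorem kappa_deriv_inv (t : ℝ) (ht : t ∈ Set.Ioo (0 : ℝ) 2) (κ : ℝ → ℝ)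
    (hdiff : Differentiable ℝ κ)
    (hκ : ∀ α : ℝ, Complex.exp (Complex.I * (κ α : ℂ)) =
      (Complex.exp (Complex.I * (mu t : ℂ)) - Complex.exp (α : ℂ)) /
        (Complex.exp (Complex.I * (mu t : ℂ) + (α : ℂ)) - 1)) :
    ∀ α : ℝ, deriv κ α = (Real.cos (κ α) + Real.cos (mu t)) / Real.sin (mu t) := by
  intro α
  obtain ⟨ht0, ht2⟩ := ht
  -- basic bounds
  have hx1 : -(Del t) < 1 := by
    unfold Del; nlinarith
  have hx2 : (-1 : ℝ) < -(Del t) := by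
    unfold Del; nlinarith
  have hsin : 0 < Real.sin (mu t) := by
    rw [mu, Real.sin_arccos]
    apply Real.sqrt_pos.2
    nlinarith
  set m : ℂ := Complex.exp (Complex.I * (mu t : ℂ)) with hm
  set e : ℂ := Complex.exp ((α : ℝ) : ℂ) with he
  have hmI : m = Complex.exp ((mu t : ℂ) * Complex.I) := by rw [hm, mul_comm]
  have hmim : m.im = Real.sin (mu t) := by
    rw [hmI, Complex.exp_mul_I]
    simp [Complex.cos_ofReal_im, Complex.sin_ofReal_re]
  have hm1 : m ≠ 1 := by
    intro h
    rw [h] at hmim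
    simp at hmim
    linarith
  have hm0 : m ≠ 0 := Complex.exp_ne_zero _
  have habs : ‖m‖ = 1 := by
    rw [hmI]; simp [Complex.norm_exp]
  have hden : m * e - 1 ≠ 0 := by
    intro h
    have hme : m * e = 1 := by linear_combination h
    have h1 : ‖m * e‖ = 1 := by rw [hme]; simp
    rw [norm_mul, habs, one_mul, he, Complex.norm_exp] at h1
    simp at h1
    have he1 : e = 1 := by rw [he, h1]; simp
    rw [he1, mul_one] at hme
    exact hm1 hme
  have hκα := hκ α
  rw [Complex.exp_add, ← hm, ← he] at hκα
  have hK0 : Complex.exp (Complex.I * ((κ α : ℝ) : ℂ)) ≠ 0 := Complex.exp_ne_zero _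
  have hnum : m - e ≠ 0 := by
    intro h
    apply hK0
    rw [hκα, h, zero_div]
  -- derivatives
  set c : ℝ := deriv κ α with hc
  have hκd : HasDerivAt κ c α := (hdiff α).hasDerivAt
  have h1 : HasDerivAt (fun a : ℝ => Complex.exp (Complex.I * ((κ a : ℝ) : ℂ)))
      (Complex.exp (Complex.I * ((κ α : ℝ) : ℂ)) * (Complex.I * (c : ℂ))) α := by
    exact (HasDerivAt.const_mul Complex.I (hκd.ofReal_comp)).cexp
  have hexp : HasDerivAt (fun a : ℝ => Complex.exp ((a : ℝ) : ℂ)) e α := by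
    have := ((hasDerivAt_id α).ofReal_comp).cexp
    simpa using this
  have h2 : HasDerivAt (fun a : ℝ => (m - Complex.exp ((a : ℝ) : ℂ)) /
      (m * Complex.exp ((a : ℝ) : ℂ) - 1))
      ((-e * (m * e - 1) - (m - e) * (m * e)) / (m * e - 1) ^ 2) α := by
    have hn : HasDerivAt (fun a : ℝ => m - Complex.exp ((a : ℝ) : ℂ)) (-e) α :=
      hexp.const_sub m
    have hd : HasDerivAt (fun a : ℝ => m * Complex.exp ((a : ℝ) : ℂ) - 1) (m * e) α :=
      (hexp.const_mul m).sub_const 1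
    exact hn.div hd hden
  have hEq : (fun a : ℝ => Complex.exp (Complex.I * ((κ a : ℝ) : ℂ))) =
      fun a : ℝ => (m - Complex.exp ((a : ℝ) : ℂ)) / (m * Complex.exp ((a : ℝ) : ℂ) - 1) := by
    funext a
    rw [hκ a, Complex.exp_add]
  rw [hEq] at h1
  have E := h2.unique h1
  -- nonzero facts
  have hsinne : Real.sin (mu t) ≠ 0 := ne_of_gt hsin
  have hm1' : m ≠ -1 := by
    intro h
    rw [h] at hmim
    simp at hmim
    linarith
  have hm2 : m⁻¹ - m ≠ 0 := by
    intro h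
    have hsq : (m - 1) * (m + 1) = 0 := by
      have h' : m * (m⁻¹ - m) = 0 := by rw [h, mul_zero]
      rw [mul_sub, mul_inv_cancel₀ hm0] at h'
      ring_nf
      ring_nf at h'
      linear_combination -h'
    rcases mul_eq_zero.1 hsq with h' | h'
    · exact hm1 (by linear_combination h')
    · exact hm1' (by linear_combination h')
  -- solve for c
  have E2 : (-e * (m * e - 1) - (m - e) * (m * e)) * (m * e - 1) =
      (m - e) * (Complex.I * (c : ℂ)) * (m * e - 1) ^ 2 := by
    rw [hκα] at E
    rw [div_eq_iff (pow_ne_zero 2 hden)] at E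
    have key : (m - e) / (m * e - 1) * (m * e - 1) = m - e := div_mul_cancel₀ _ hden
    linear_combination (m * e - 1) * E + (Complex.I * (c : ℂ)) * (m * e - 1) ^ 2 * key
  have E3 : -e * (m * e - 1) - (m - e) * (m * e) =
      (m - e) * (Complex.I * (c : ℂ)) * (m * e - 1) :=
    mul_right_cancel₀ hden (by linear_combination E2)
  have hcval : ((c : ℝ) : ℂ) = e * (1 - m ^ 2) / (Complex.I * (m - e) * (m * e - 1)) := by
    rw [eq_div_iff (mul_ne_zero (mul_ne_zero Complex.I_ne_zero hnum) hden)]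
    linear_combination -E3
  -- final goal
  have hgoal : ((c : ℝ) : ℂ) = ((Real.cos (κ α) + Real.cos (mu t)) / Real.sin (mu t) : ℝ) := by
    push_cast
    have hcosK : Complex.cos (((κ α : ℝ)) : ℂ) = (Complex.exp (Complex.I * ((κ α : ℝ) : ℂ)) +
        (Complex.exp (Complex.I * ((κ α : ℝ) : ℂ)))⁻¹) / 2 := by
      rw [Complex.cos, ← Complex.exp_neg]
      ring_nf
    have hcosM : Complex.cos (((mu t : ℝ)) : ℂ) = (m + m⁻¹) / 2 := by
      rw [Complex.cos, hmI, ← Complex.exp_neg]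
      ring_nf
    have hsinM : Complex.sin (((mu t : ℝ)) : ℂ) = (m⁻¹ - m) * Complex.I / 2 := by
      rw [Complex.sin, hmI, ← Complex.exp_neg]
      ring_nf
    rw [hcosK, hcosM, hsinM, hκα, inv_div, hcval]
    rw [div_eq_div_iff (mul_ne_zero (mul_ne_zero Complex.I_ne_zero hnum) hden)
      (by
        apply div_ne_zero (mul_ne_zero hm2 Complex.I_ne_zero) two_ne_zero)]
    have hden2 : e * m - 1 ≠ 0 := by rw [mul_comm]; exact hden
    field_simp [hden2]
    ring
  exact_mod_cast hgoal
end

section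
/- Let R, R' : {0,1}² → M₂(ℂ) and N ≥ 1, with transfer matrices T_N and T'_N. Then for all words u,v ∈ {0,1}^N: (T_N · T'_N)[u,v] = Tr(∏_{k=1}^N (R'∘R)(u_k,v_k)), the product of 4×4 matrices being taken in increasing order of k. -/
open Matrix Complex Finset

lemma monodromy_succ {N : ℕ} (R : Fin 2 → Fin 2 → Matrix (Fin 2) (Fin 2) ℂ)
    (u v : Fin (N + 1) → Fin 2) :
    monodromy R u v =
      R (u 0) (v 0) * monodromy R (u ∘ Fin.succ) (v ∘ Fin.succ) := by
  simp only [monodromy, List.finRange_succ, List.map_cons, List.prod_cons,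
    List.map_map]
  rfl

lemma comp_prod_eq_sum (R Rp : Fin 2 → Fin 2 → Matrix (Fin 2) (Fin 2) ℂ) :
    ∀ (N : ℕ) (u v : Fin N → Fin 2),
      (((List.finRange N).map fun k => comp Rp R (u k) (v k)).prod) =
        ∑ w : Fin N → Fin 2,
          Matrix.kroneckerMap (· * ·) (monodromy R u w) (monodromy Rp w v) := by
  intro N
  induction N with
  | zero =>
      intro u v
      rw [show (Finset.univ : Finset (Fin 0 → Fin 2)) = {fun i => i.elim0} from
        Finset.eq_singleton_iff_unique_mem.2
          ⟨Finset.mem_univ _, fun w _ => funext fun i => i.elim0⟩]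
      simp [monodromy, Matrix.one_kronecker_one]
  | succ N ih =>
      intro u v
      rw [← Equiv.sum_comp (Fin.consEquiv fun _ : Fin (N+1) => Fin 2)
          (fun w => Matrix.kroneckerMap (· * ·) (monodromy R u w) (monodromy Rp w v)),
        Fintype.sum_prod_type]
      rw [List.finRange_succ, List.map_cons, List.prod_cons, List.map_map]
      have h := ih (u ∘ Fin.succ) (v ∘ Fin.succ)
      rw [show ((List.finRange N).map ((fun k => comp Rp R (u k) (v k)) ∘ Fin.succ))
          = (List.finRange N).map fun k =>
              comp Rp R ((u ∘ Fin.succ) k) ((v ∘ Fin.succ) k) from rfl, h]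
      rw [_root_.comp, Finset.sum_mul]
      refine Finset.sum_congr rfl fun x _ => ?_
      rw [Finset.mul_sum]
      refine Finset.sum_congr rfl fun w' _ => ?_
      rw [show (Fin.consEquiv fun _ : Fin (N+1) => Fin 2) (x, w') = Fin.cons x w' from rfl]
      rw [monodromy_succ R u (Fin.cons x w'), monodromy_succ Rp (Fin.cons x w') v,
        ← Matrix.mul_kronecker_mul]
      congr 2 <;> · funext i; simp [Function.comp, Fin.cons_succ]

theorem transfer_product_trace (R Rp : Fin 2 → Fin 2 → Matrix (Fin 2) (Fin 2) ℂ)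
    (N : ℕ) (hN : 1 ≤ N) (u v : Fin N → Fin 2) :
    (transfer N R * transfer N Rp) u v =
      (((List.finRange N).map fun k => comp Rp R (u k) (v k)).prod).trace := by
  rw [comp_prod_eq_sum, Matrix.trace_sum]
  simp only [Matrix.trace_kronecker]
  rfl
end

section
/- Let R, R' : {0,1}² → M₂(ℂ) and let Q ∈ M₄(ℂ) be invertible and satisfy the Yang–Baxter equation with (R,R'). Then for every N ≥ 1 and all words u,v ∈ {0,1}^N: ∏_{k=1}^N (R'∘R)(u_k,v_k) = Q · (∏_{k=1}^N (R∘R')(u_k,v_k)) · Q^{−1}, and consequently the transfer matrices of R and R' commute: T_N · T'_N = T'_N · T_N. -/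
open Matrix Complex Finset

section Aux

open Matrix

lemma prod_sum_kron (N : ℕ) (A B : Fin N → Fin 2 → Matrix (Fin 2) (Fin 2) ℂ) :
    ((List.finRange N).map fun k =>
        ∑ x : Fin 2, Matrix.kroneckerMap (· * ·) (A k x) (B k x)).prod
      = ∑ v : Fin N → Fin 2,
        Matrix.kroneckerMap (· * ·) (((List.finRange N).map fun k => A k (v k)).prod)
          (((List.finRange N).map fun k => B k (v k)).prod) := by
  induction N with
  | zero =>
      simp [Matrix.one_kronecker_one]
  | succ n ih =>
      rw [← Equiv.sum_comp (Fin.consEquiv fun _ => Fin 2)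
        (fun v : Fin (n+1) → Fin 2 =>
          Matrix.kroneckerMap (· * ·) (((List.finRange (n+1)).map fun k => A k (v k)).prod)
            (((List.finRange (n+1)).map fun k => B k (v k)).prod)),
        Fintype.sum_prod_type, List.finRange_succ]
      simp only [List.map_cons, List.prod_cons, List.map_map, Function.comp_def,
        Fin.consEquiv_apply, Fin.cons_zero, Fin.cons_succ]
      rw [ih (fun k x => A k.succ x) (fun k x => B k.succ x), Finset.sum_mul_sum]
      exact Finset.sum_congr rfl fun x _ => Finset.sum_congr rfl fun v _ =>
        (Matrix.mul_kronecker_mul _ _ _ _).symm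

lemma conj_prod (R Rp : Fin 2 → Fin 2 → Matrix (Fin 2) (Fin 2) ℂ)
    (Q : Matrix (Fin 2 × Fin 2) (Fin 2 × Fin 2) ℂ) (hQ : IsUnit Q.det)
    (hYB : YBE R Rp Q) (N : ℕ) (u v : Fin N → Fin 2) :
    ((List.finRange N).map fun k => comp Rp R (u k) (v k)).prod =
      Q * ((List.finRange N).map fun k => comp R Rp (u k) (v k)).prod * Q⁻¹ := by
  induction N with
  | zero =>
      simp [Matrix.mul_nonsing_inv Q hQ]
  | succ n ih =>
      rw [List.finRange_succ]
      simp only [List.map_cons, List.prod_cons, List.map_map, Function.comp_def]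
      rw [ih (fun k => u k.succ) (fun k => v k.succ)]
      rw [← mul_assoc, ← mul_assoc, hYB (u 0) (v 0), mul_assoc Q]

end Aux

theorem yang_baxter_commutation (R Rp : Fin 2 → Fin 2 → Matrix (Fin 2) (Fin 2) ℂ)
    (Q : Matrix (Fin 2 × Fin 2) (Fin 2 × Fin 2) ℂ) (hQ : IsUnit Q)
    (hYB : YBE R Rp Q) (N : ℕ) (hN : 1 ≤ N) :
    (∀ u v : Fin N → Fin 2,
      ((List.finRange N).map fun k => comp Rp R (u k) (v k)).prod =
        Q * ((List.finRange N).map fun k => comp R Rp (u k) (v k)).prod * Q⁻¹) ∧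
    transfer N R * transfer N Rp = transfer N Rp * transfer N R := by
  refine ⟨fun u v => conj_prod R Rp Q ((Matrix.isUnit_iff_isUnit_det Q).mp hQ) hYB N u v, ?_⟩
  have hd : IsUnit Q.det := (Matrix.isUnit_iff_isUnit_det Q).mp hQ
  ext u w
  have key : ∀ (S Sp : Fin 2 → Fin 2 → Matrix (Fin 2) (Fin 2) ℂ),
      (((List.finRange N).map fun k => comp Sp S (u k) (w k)).prod).trace
        = ∑ v : Fin N → Fin 2, (monodromy S u v).trace * (monodromy Sp v w).trace := by
    intro S Sp
    have := prod_sum_kron N (fun k x => S (u k) x) (fun k x => Sp x (w k))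
    simp only [_root_.comp]
    rw [this, Matrix.trace_sum]
    refine Finset.sum_congr rfl fun v _ => ?_
    rw [Matrix.trace_kronecker]
    rfl
  have hconj : (((List.finRange N).map fun k => comp Rp R (u k) (w k)).prod).trace
      = (((List.finRange N).map fun k => comp R Rp (u k) (w k)).prod).trace := by
    rw [conj_prod R Rp Q hd hYB N u w, Matrix.trace_mul_comm,
      ← mul_assoc, Matrix.nonsing_inv_mul Q hd, one_mul]
  have h1 := key R Rp
  have h2 := key Rp R
  rw [hconj] at h1
  simp only [Matrix.mul_apply, transfer]
  rw [← h1, ← h2]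
end

section
/- Let (a,b,c), (a',b',c') ∈ ℂ³ with ab ≠ 0 and a'b' ≠ 0, and suppose (a²+b²−c²)/(2ab) = (a'²+b'²−c'²)/(2a'b'). Then there exists (a'',b'',c'') ∈ ℂ³ with (a'',b'',c'') ≠ (0,0,0) such that the system (S)[(a,b,c),(a',b',c'),(a'',b'',c'')] holds. -/
open Matrix Complex Finset

/- Viewed as a linear system in `(a'', b'', c'')`, (S) has coefficient determinant
`c c' (a b (a'² + b'² - c'²) - a' b' (a² + b² - c²))`, which the hypothesis on the two
ratios makes vanish; a nonzero kernel vector is then the required solution. -/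

section

variable {R : Type*} [CommRing R]

def systemSMatrix (a b c a' b' c' : R) : Matrix (Fin 3) (Fin 3) R :=
  !![a' * c, -(b' * c), -(c' * a);
     0, -(c * c'), a' * b - b' * a;
     c' * b, -(c' * a), -(b' * c)]

theorem det_systemSMatrix (a b c a' b' c' : R) :
    (systemSMatrix a b c a' b' c').det =
      c * c' * (a * b * (a' ^ 2 + b' ^ 2 - c' ^ 2) - a' * b' * (a ^ 2 + b ^ 2 - c ^ 2)) := by
  rw [systemSMatrix, Matrix.det_fin_three]
  simp only [Matrix.of_apply, Matrix.cons_val', Matrix.cons_val_zero, Matrix.cons_val_one,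
    Matrix.cons_val_two, Matrix.empty_val', Matrix.cons_val_fin_one, Matrix.head_cons,
    Matrix.tail_cons, Matrix.head_fin_const]
  ring

end

theorem systemS_iff_systemSMatrix_mulVec_eq_zero (a b c a' b' c' : ℂ) (v : Fin 3 → ℂ) :
    SystemS a b c a' b' c' (v 0) (v 1) (v 2) ↔ systemSMatrix a b c a' b' c' *ᵥ v = 0 := by
  simp only [SystemS, funext_iff, Fin.forall_fin_succ, IsEmpty.forall_iff, and_true,
    systemSMatrix, Matrix.mulVec, dotProduct, Fin.sum_univ_three, Matrix.of_apply,
    Matrix.cons_val', Matrix.cons_val_zero, Matrix.cons_val_fin_one, Matrix.cons_val_one,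
    Matrix.cons_val, Pi.zero_apply, Fin.succ_zero_eq_one, Fin.succ_one_eq_two, zero_mul, zero_add]
  refine and_congr ?_ (and_congr ?_ ?_) <;> constructor <;> intro h <;> linear_combination h

theorem systemS_solvable (a b c a' b' c' : ℂ) (hab : a * b ≠ 0) (hab' : a' * b' ≠ 0)
    (hdelta : (a ^ 2 + b ^ 2 - c ^ 2) / (2 * a * b) =
      (a' ^ 2 + b' ^ 2 - c' ^ 2) / (2 * a' * b')) :
    ∃ a'' b'' c'' : ℂ, (a'', b'', c'') ≠ (0, 0, 0) ∧
      SystemS a b c a' b' c' a'' b'' c'' := by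
  have hcross : (a ^ 2 + b ^ 2 - c ^ 2) * (2 * a' * b') =
      (a' ^ 2 + b' ^ 2 - c' ^ 2) * (2 * a * b) := by
    rwa [div_eq_div_iff (by simpa [mul_assoc] using hab) (by simpa [mul_assoc] using hab')]
      at hdelta
  have hdet : (systemSMatrix a b c a' b' c').det = 0 := by
    rw [det_systemSMatrix]
    linear_combination (-(c * c') / 2) * hcross
  obtain ⟨v, hv, hkernel⟩ := Matrix.exists_mulVec_eq_zero_iff.2 hdet
  refine ⟨v 0, v 1, v 2, fun h => hv ?_,
    (systemS_iff_systemSMatrix_mulVec_eq_zero _ _ _ _ _ _ v).2 hkernel⟩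
  simp only [Prod.mk.injEq] at h
  ext i
  fin_cases i <;> simp [h]
end

section
/- Let γ ∈ ℝ∖πℤ and x,y ∈ ℂ. Then the north-east matrix associated to R_γ^{y−x} satisfies the Yang–Baxter equation with (R_γ^x, R_γ^y). -/
open Matrix Complex Finset

/-!
Writing out `(R'∘R)(s,v) · Q = Q · (R∘R')(s,v)` entrywise for local matrix functions, every
entry equation is trivial or one of the three cubic equations of system (S). These are
homogeneous in the parameters, so for `R_γ^x` the normalisation `1 / sin(γ/2)` drops out and
(S) reduces to three addition-theorem identities between sines.
-/

theorem comp_apply_apply (R R' : Fin 2 → Fin 2 → Matrix (Fin 2) (Fin 2) ℂ) (s v : Fin 2)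
    (w z : Fin 2 × Fin 2) :
    _root_.comp R' R s v w z = R s 0 w.1 z.1 * R' 0 v w.2 z.2 + R s 1 w.1 z.1 * R' 1 v w.2 z.2 := by
  simp [_root_.comp, Fin.sum_univ_two]

theorem ybe_localR_of_systemS {a b c a' b' c' a'' b'' c'' : ℂ}
    (h : SystemS a b c a' b' c' a'' b'' c'') :
    YBE (localR a' b' c') (localR a b c) (northEast a'' b'' c'') := by
  obtain ⟨h₁, h₂, h₃⟩ := h
  intro s v
  ext ⟨i, j⟩ ⟨k, l⟩
  simp only [Matrix.mul_apply, Fintype.sum_prod_type, Fin.sum_univ_two, comp_apply_apply]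
  fin_cases s <;> fin_cases v <;> fin_cases i <;> fin_cases j <;> fin_cases k <;> fin_cases l <;>
    simp +decide [localR, northEast] <;>
    first
      | ring1
      | linear_combination h₁
      | linear_combination -h₁
      | linear_combination h₂
      | linear_combination -h₂
      | linear_combination h₃
      | linear_combination -h₃

theorem SystemS.div_const {a b c a' b' c' a'' b'' c'' : ℂ}
    (h : SystemS a b c a' b' c' a'' b'' c'') (k : ℂ) :
    SystemS (a / k) (b / k) (c / k) (a' / k) (b' / k) (c' / k) (a'' / k) (b'' / k) (c'' / k) := by
  obtain ⟨h₁, h₂, h₃⟩ := h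
  refine ⟨?_, ?_, ?_⟩
  · linear_combination h₁ / k ^ 3
  · linear_combination h₂ / k ^ 3
  · linear_combination h₃ / k ^ 3

theorem systemS_sin (g u v : ℂ) :
    SystemS (sin (g - v)) (sin v) (sin g) (sin (g - u)) (sin u) (sin g)
      (sin (g - (v - u))) (sin (v - u)) (sin g) := by
  simp only [SystemS, sin_sub, cos_sub]
  refine ⟨?_, ?_, ?_⟩
  · linear_combination sin g * ((sin u * cos u * sin v - sin u ^ 2 * cos v) * sin_sq_add_cos_sq g
      + (sin g ^ 2 * cos v - sin g * cos g * sin v) * sin_sq_add_cos_sq u)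
  · ring
  · linear_combination sin g ^ 2 * sin u * sin_sq_add_cos_sq v

theorem trigonometric_ybe_general (γ : ℝ) (x y : ℂ) :
    YBE (Rg γ x) (Rg γ y) (northEast (aG γ (y - x)) (bG γ (y - x)) (cG γ)) :=
  ybe_localR_of_systemS <| by
    simpa only [aG, bG, cG] using (systemS_sin (γ : ℂ) x y).div_const (sin ((γ : ℂ) / 2))

theorem trigonometric_ybe (γ : ℝ) (hγ : ∀ k : ℤ, γ ≠ k * Real.pi) (x y : ℂ) :
    YBE (Rg γ x) (Rg γ y) (northEast (aG γ (y - x)) (bG γ (y - x)) (cG γ)) :=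
  trigonometric_ybe_general γ x y
end

section
/- Let γ ∈ ℝ∖πℤ and N ≥ 1. Then for all x,y ∈ ℂ, the transfer matrices T^x_{γ,N} and T^y_{γ,N} commute: T^x_{γ,N} · T^y_{γ,N} = T^y_{γ,N} · T^x_{γ,N}. -/
open Matrix Complex Finset

set_option maxHeartbeats 2000000

open Complex

/-! ### Generic algebraic lemmas -/

lemma sum_fun_prod' {R : Type*} [NonAssocSemiring R] (N : ℕ) (f : Fin N → Fin 2 → R) :
    ∑ w : Fin N → Fin 2, ((List.finRange N).map fun k => f k (w k)).prod
      = ((List.finRange N).map fun k => ∑ u : Fin 2, f k u).prod := by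
  induction N with
  | zero => simp
  | succ n ih =>
      rw [← (Fin.consEquiv (fun _ => Fin 2)).sum_comp
        (fun w => ((List.finRange (n+1)).map fun k => f k (w k)).prod)]
      rw [Fintype.sum_prod_type]
      simp only [List.finRange_succ, List.map_cons, List.prod_cons, List.map_map,
        Fin.consEquiv_apply, Fin.cons_zero, Fin.cons_succ, Function.comp_def]
      calc ∑ x : Fin 2, ∑ w : Fin n → Fin 2,
              f 0 x * ((List.finRange n).map fun k => f k.succ (w k)).prod
          = ∑ x : Fin 2, f 0 x * ∑ w : Fin n → Fin 2,
              ((List.finRange n).map fun k => f k.succ (w k)).prod := by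
            exact Finset.sum_congr rfl fun a _ => (Finset.mul_sum _ _ _).symm
        _ = (∑ u : Fin 2, f 0 u) * ((List.finRange n).map fun k => ∑ u, f k.succ u).prod := by
            rw [← Finset.sum_mul, ih (fun k => f k.succ)]

lemma transfer_mul_apply (N : ℕ) (R R' : Fin 2 → Fin 2 → Matrix (Fin 2) (Fin 2) ℂ)
    (u v : Fin N → Fin 2) :
    (transfer N R * transfer N R') u v
      = (((List.finRange N).map fun k => _root_.comp R' R (u k) (v k)).prod).trace := by
  rw [Matrix.mul_apply]
  have h1 : ∀ w : Fin N → Fin 2, transfer N R u w * transfer N R' w v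
      = (((List.finRange N).map fun k =>
          Matrix.kroneckerMap (· * ·) (R (u k) (w k)) (R' (w k) (v k))).prod).trace := by
    intro w
    rw [transfer, transfer, ← Matrix.trace_kronecker, monodromy, monodromy]
    congr 1
    induction (List.finRange N) with
    | nil => simp [Matrix.one_kronecker_one (α := ℂ)]
    | cons a l ih => simp only [List.map_cons, List.prod_cons, Matrix.mul_kronecker_mul, ih]
  simp only [h1]
  rw [← Matrix.trace_sum]
  congr 1
  exact sum_fun_prod' N (fun k a => Matrix.kroneckerMap (· * ·) (R (u k) a) (R' a (v k)))

lemma prod_conj' {n : Type*} [Fintype n] [DecidableEq n] {ι : Type*} (l : List ι)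
    (P P' : ι → Matrix n n ℂ) (Q : Matrix n n ℂ)
    (h : ∀ k, P k * Q = Q * P' k) :
    ((l.map P).prod) * Q = Q * ((l.map P').prod) := by
  induction l with
  | nil => simp
  | cons a l ih =>
      simp only [List.map_cons, List.prod_cons]
      rw [mul_assoc, ih, ← mul_assoc, h a, mul_assoc]

lemma trace_eq_of_conj' {n : Type*} [Fintype n] [DecidableEq n]
    (A B Q Qi : Matrix n n ℂ) (h1 : Q * Qi = 1) (h2 : Qi * Q = 1)
    (h : A * Q = Q * B) : A.trace = B.trace := by
  have hB : B = Qi * A * Q := by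
    calc B = (Qi * Q) * B := by rw [h2, one_mul]
    _ = Qi * (A * Q) := by rw [mul_assoc, ← h]
    _ = Qi * A * Q := by rw [mul_assoc]
  rw [hB, Matrix.trace_mul_cycle, h1, one_mul]

lemma ybe_of_system' (a b c a' b' c' A B C : ℂ)
    (h1 : a * c' * A = c * a' * C + b * c' * B)
    (h2 : c * b' * A = c * a' * B + b * c' * C)
    (h3 : a * b' * C = c * c' * B + b * a' * C) :
    YBE (localR a b c) (localR a' b' c') (northEast A B C) := by
  intro s v
  ext ⟨p1, p2⟩ ⟨q1, q2⟩
  fin_cases s <;> fin_cases v <;> fin_cases p1 <;> fin_cases p2 <;>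
    fin_cases q1 <;> fin_cases q2 <;>
    simp (config := { decide := true }) [_root_.comp, Matrix.mul_apply, Fintype.sum_prod_type,
      Fin.sum_univ_two, Matrix.sum_apply, localR, northEast, Matrix.kroneckerMap_apply,
      Prod.mk.injEq] <;>
    first
      | ring1
      | linear_combination h1
      | linear_combination -h1
      | linear_combination h2
      | linear_combination -h2
      | linear_combination h3
      | linear_combination -h3

lemma northEast_inv' (A B C : ℂ) (hA : A ≠ 0) (hCB : C ^ 2 - B ^ 2 ≠ 0) :
    ∃ Qi, northEast A B C * Qi = 1 ∧ Qi * northEast A B C = 1 := by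
  refine ⟨fun p q =>
    if (p = (0,0) ∧ q = (0,0)) ∨ (p = (1,1) ∧ q = (1,1)) then A⁻¹
    else if (p = (0,1) ∧ q = (0,1)) ∨ (p = (1,0) ∧ q = (1,0)) then C / (C ^ 2 - B ^ 2)
    else if (p = (0,1) ∧ q = (1,0)) ∨ (p = (1,0) ∧ q = (0,1)) then -B / (C ^ 2 - B ^ 2)
    else 0, ?_, ?_⟩ <;>
  · ext ⟨p1, p2⟩ ⟨q1, q2⟩
    erw [Matrix.mul_apply]
    fin_cases p1 <;> fin_cases p2 <;> fin_cases q1 <;> fin_cases q2 <;>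
      simp (config := { decide := true }) [Matrix.mul_apply, Fintype.sum_prod_type,
        Fin.sum_univ_two, northEast, Matrix.one_apply, Prod.mk.injEq] <;>
      field_simp <;> ring

/-! ### Trigonometric identities -/

lemma sin_expand' (z : ℂ) : sin z = (exp (z*I) - (exp (z*I))⁻¹) / (2*I) := by
  rw [Complex.sin, neg_mul, Complex.exp_neg]
  rw [div_eq_div_iff (by norm_num) (by simp [Complex.I_ne_zero])]
  ring_nf
  simp [Complex.I_sq]
  ring

lemma trig1 (g x y : ℂ) :
    sin (g-x) * sin g * sin (g-(y-x))
      = sin g * sin (g-y) * sin g + sin x * sin g * sin (y-x) := by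
  simp only [sin_expand', sub_mul, Complex.exp_sub]
  have h1 := Complex.exp_ne_zero (g*I)
  have h2 := Complex.exp_ne_zero (x*I)
  have h3 := Complex.exp_ne_zero (y*I)
  have hI := Complex.I_ne_zero
  generalize Complex.exp (g*I) = eg at h1 ⊢
  generalize Complex.exp (x*I) = ex at h2 ⊢
  generalize Complex.exp (y*I) = ey at h3 ⊢
  field_simp [h1,h2,h3,hI]
  ring

lemma trig2 (g x y : ℂ) :
    sin g * sin y * sin (g-(y-x))
      = sin g * sin (g-y) * sin (y-x) + sin x * sin g * sin g := by
  simp only [sin_expand', sub_mul, Complex.exp_sub]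
  have h1 := Complex.exp_ne_zero (g*I)
  have h2 := Complex.exp_ne_zero (x*I)
  have h3 := Complex.exp_ne_zero (y*I)
  have hI := Complex.I_ne_zero
  generalize Complex.exp (g*I) = eg at h1 ⊢
  generalize Complex.exp (x*I) = ex at h2 ⊢
  generalize Complex.exp (y*I) = ey at h3 ⊢
  field_simp [h1,h2,h3,hI]
  ring

lemma trig3 (g x y : ℂ) :
    sin (g-x) * sin y * sin g
      = sin g * sin g * sin (y-x) + sin x * sin (g-y) * sin g := by
  simp only [sin_expand', sub_mul, Complex.exp_sub]
  have h1 := Complex.exp_ne_zero (g*I)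
  have h2 := Complex.exp_ne_zero (x*I)
  have h3 := Complex.exp_ne_zero (y*I)
  have hI := Complex.I_ne_zero
  generalize Complex.exp (g*I) = eg at h1 ⊢
  generalize Complex.exp (x*I) = ex at h2 ⊢
  generalize Complex.exp (y*I) = ey at h3 ⊢
  field_simp [h1,h2,h3,hI]
  ring

lemma trig4 (g d : ℂ) : sin g ^ 2 - sin d ^ 2 = sin (g-d) * sin (g+d) := by
  simp only [sin_expand', sub_mul, add_mul, Complex.exp_sub, Complex.exp_add]
  have h1 := Complex.exp_ne_zero (g*I)
  have h2 := Complex.exp_ne_zero (d*I)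
  have hI := Complex.I_ne_zero
  generalize Complex.exp (g*I) = eg at h1 ⊢
  generalize Complex.exp (d*I) = ed at h2 ⊢
  field_simp [h1,h2,hI]
  ring

/-! ### The trigonometric YBE -/

lemma ybe_trig (γ : ℝ) (hs : Complex.sin ((γ:ℂ)/2) ≠ 0) (x y : ℂ) :
    YBE (Rg γ x) (Rg γ y) (northEast (aG γ (y-x)) (bG γ (y-x)) (cG γ)) := by
  apply ybe_of_system'
  · unfold aG bG cG
    field_simp
    linear_combination trig1 (γ:ℂ) x y
  · unfold aG bG cG
    field_simp
    linear_combination trig2 (γ:ℂ) x y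
  · unfold aG bG cG
    field_simp
    linear_combination trig3 (γ:ℂ) x y

lemma commute_good (γ : ℝ) (hs : Complex.sin ((γ:ℂ)/2) ≠ 0) (N : ℕ) (x y : ℂ)
    (h1 : Complex.sin ((γ:ℂ) - (y - x)) ≠ 0)
    (h2 : Complex.sin ((γ:ℂ) + (y - x)) ≠ 0) :
    transfer N (Rg γ x) * transfer N (Rg γ y)
      = transfer N (Rg γ y) * transfer N (Rg γ x) := by
  have hA : aG γ (y-x) ≠ 0 := div_ne_zero h1 hs
  have hCB : cG γ ^ 2 - bG γ (y-x) ^ 2 ≠ 0 := by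
    have : cG γ ^ 2 - bG γ (y-x) ^ 2
        = (Complex.sin ((γ:ℂ) - (y-x)) * Complex.sin ((γ:ℂ) + (y-x)))
            / Complex.sin ((γ:ℂ)/2) ^ 2 := by
      unfold bG cG
      rw [div_pow, div_pow, div_sub_div_same]
      congr 1
      linear_combination trig4 (γ:ℂ) (y-x)
    rw [this]
    exact div_ne_zero (mul_ne_zero h1 h2) (pow_ne_zero _ hs)
  obtain ⟨Qi, hQ1, hQ2⟩ := northEast_inv' _ _ _ hA hCB
  have hY := ybe_trig γ hs x y
  ext u v
  rw [transfer_mul_apply, transfer_mul_apply]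
  refine trace_eq_of_conj' _ _ _ _ hQ1 hQ2 ?_
  exact prod_conj' _ _ _ _ (fun k => hY (u k) (v k))

/-! ### Continuity -/

lemma cont_Rg (γ : ℝ) (a b : Fin 2) : Continuous fun x : ℂ => Rg γ x a b := by
  have hA : Continuous fun x : ℂ => aG γ x :=
    (Complex.continuous_sin.comp (continuous_const.sub continuous_id)).div_const _
  have hB : Continuous fun x : ℂ => bG γ x := Complex.continuous_sin.div_const _
  unfold Rg localR
  split_ifs <;>
    · apply continuous_matrix
      intro i j
      fin_cases i <;> fin_cases j <;>
        simp only [Matrix.cons_val', Matrix.cons_val_zero, Matrix.cons_val_one,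
          Matrix.head_cons, Matrix.head_fin_const, Matrix.empty_val',
          Matrix.cons_val_fin_one, Fin.isValue] <;>
        first | exact hA | exact hB | exact continuous_const

lemma cont_transfer (γ : ℝ) {N : ℕ} (u v : Fin N → Fin 2) :
    Continuous fun x : ℂ => transfer N (Rg γ x) u v := by
  have key : ∀ l : List (Fin N),
      Continuous fun x : ℂ => ((l.map fun k => Rg γ x (u k) (v k))).prod := by
    intro l
    induction l with
    | nil => simpa using continuous_const
    | cons a l ih =>
        simp only [List.map_cons, List.prod_cons]
        exact (cont_Rg γ _ _).matrix_mul ih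
  exact (key (List.finRange N)).matrix_trace


theorem trigonometric_transfer_commute (γ : ℝ) (hγ : ∀ k : ℤ, γ ≠ k * Real.pi)
    (N : ℕ) (hN : 1 ≤ N) (x y : ℂ) :
    transfer N (Rg γ x) * transfer N (Rg γ y) =
      transfer N (Rg γ y) * transfer N (Rg γ x) := by
  have hs : Complex.sin ((γ:ℂ)/2) ≠ 0 := by
    have hcast : ((γ:ℂ)/2) = ((γ/2 : ℝ) : ℂ) := by push_cast; ring
    rw [hcast, ← Complex.ofReal_sin]
    simp only [ne_eq, Complex.ofReal_eq_zero]
    intro h0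
    rcases Real.sin_eq_zero_iff.mp h0 with ⟨n, hn⟩
    exact hγ (2*n) (by push_cast; linarith)
  ext u v
  set Sbad : Set ℂ := (Set.range fun k : ℤ => y - (γ:ℂ) + k * (Real.pi : ℂ))
      ∪ (Set.range fun k : ℤ => y + (γ:ℂ) - k * (Real.pi : ℂ)) with hSbad
  have hc : Sbad.Countable := (Set.countable_range _).union (Set.countable_range _)
  have hd : Dense Sbadᶜ := hc.dense_compl ℂ
  have hf : Continuous fun z : ℂ =>
      (transfer N (Rg γ z) * transfer N (Rg γ y)) u v := by
    simp only [Matrix.mul_apply]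
    exact continuous_finset_sum _ fun w _ => (cont_transfer γ u w).mul continuous_const
  have hg : Continuous fun z : ℂ =>
      (transfer N (Rg γ y) * transfer N (Rg γ z)) u v := by
    simp only [Matrix.mul_apply]
    exact continuous_finset_sum _ fun w _ => continuous_const.mul (cont_transfer γ w v)
  have heq : Set.EqOn (fun z : ℂ => (transfer N (Rg γ z) * transfer N (Rg γ y)) u v)
      (fun z : ℂ => (transfer N (Rg γ y) * transfer N (Rg γ z)) u v) Sbadᶜ := by
    intro z hz
    rw [Set.mem_compl_iff, hSbad, Set.mem_union, not_or] at hz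
    obtain ⟨hz1, hz2⟩ := hz
    have hs1 : Complex.sin ((γ:ℂ) - (y - z)) ≠ 0 := by
      intro h0
      rcases Complex.sin_eq_zero_iff.mp h0 with ⟨k, hk⟩
      exact hz1 ⟨k, by linear_combination -hk⟩
    have hs2 : Complex.sin ((γ:ℂ) + (y - z)) ≠ 0 := by
      intro h0
      rcases Complex.sin_eq_zero_iff.mp h0 with ⟨k, hk⟩
      exact hz2 ⟨k, by linear_combination hk⟩
    have := commute_good γ hs N z y hs1 hs2
    exact congrFun (congrFun this u) v
  have := Continuous.ext_on hd hf hg heq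
  exact congrFun this x
end

section
/- Let t ∈ (0,2), N ≥ 1, n ≤ N, and let p₁ < ⋯ < p_n in I_t, each p_j admitting an admissible parameter α_j; set x_j = μ_t/2 + i·α_j/2. If (p₁,…,p_n) satisfies the exponential Bethe equations for (t,n,N), then for every j: a_t(x_j)^N · ∏_{k≠j} a_t(x_k − x_j)/b_t(x_k − x_j) = b_t(x_j)^N · ∏_{k≠j} a_t(x_j − x_k)/b_t(x_j − x_k). -/
open Matrix Complex Finset

private lemma sinExp (w v : ℂ) :
    Complex.sin w * (2 * Complex.I * Complex.exp v) =
      Complex.exp (v + w * Complex.I) - Complex.exp (v - w * Complex.I) := by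
  rw [Complex.sin, sub_eq_add_neg v (w * Complex.I), Complex.exp_add, Complex.exp_add, neg_mul]
  linear_combination (Complex.exp (-(w * Complex.I)) - Complex.exp (w * Complex.I)) *
    Complex.exp v * Complex.I_mul_I

private lemma prodNeg {ι : Type*} (s : Finset ι) (f : ι → ℂ) :
    ∏ k ∈ s, -f k = (-1 : ℂ) ^ s.card * ∏ k ∈ s, f k := by
  rw [← Finset.prod_const (-1 : ℂ), ← Finset.prod_mul_distrib]
  exact Finset.prod_congr rfl fun k _ => by ring

set_option maxHeartbeats 2000000 in
theorem identification_equations (t : ℝ) (ht : t ∈ Set.Ioo (0 : ℝ) 2) (N n : ℕ)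
    (hN : 1 ≤ N) (hnN : n ≤ N) (p : Fin n → ℝ) (hmono : StrictMono p)
    (hI : ∀ j, p j ∈ Set.Ioo (-(Real.pi - mu t)) (Real.pi - mu t))
    (α : Fin n → ℝ) (hadm : ∀ j, Admissible t (p j) (α j))
    (x : Fin n → ℂ) (hx : ∀ j, x j = (mu t : ℂ) / 2 + Complex.I * (α j : ℂ) / 2)
    (hBethe : BetheExp t n N p) :
    ∀ j : Fin n,
      aG (mu t) (x j) ^ N *
          ∏ k ∈ Finset.univ.erase j, aG (mu t) (x k - x j) / bG (mu t) (x k - x j) =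
        bG (mu t) (x j) ^ N *
          ∏ k ∈ Finset.univ.erase j, aG (mu t) (x j - x k) / bG (mu t) (x j - x k) := by
  intro j
  unfold aG bG
  obtain ⟨ht0, ht2⟩ := ht
  have hD1 : Del t < 1 := by unfold Del; nlinarith
  have hD2 : -1 < Del t := by unfold Del; nlinarith
  have hmu0 : 0 < mu t := Real.arccos_pos.mpr (by linarith)
  have hmupi : mu t < Real.pi := lt_of_le_of_ne (Real.arccos_le_pi _)
    (fun hcon => by have := Real.arccos_eq_pi.mp hcon; linarith)
  have hcosmu : Real.cos (mu t) = -(Del t) := Real.cos_arccos (by linarith) (by linarith)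
  set m : ℂ := ((mu t : ℝ) : ℂ) with hm
  set q : ℂ := Complex.exp (Complex.I * m) with hqdef
  set g : ℂ := Complex.exp (Complex.I * m / 2) with hgdef
  set E : Fin n → ℂ := fun k => Complex.exp ((α k : ℂ)) with hEdef
  set hv : Fin n → ℂ := fun k => Complex.exp ((α k : ℂ) / 2) with hhdef
  set z : Fin n → ℂ := fun k => Complex.exp (Complex.I * ((p k : ℝ) : ℂ)) with hzdef
  have hEk : ∀ k, Complex.exp ((α k : ℂ)) = E k := fun k => by rw [hEdef]
  have hhk : ∀ k, Complex.exp ((α k : ℂ) / 2) = hv k := fun k => by rw [hhdef]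
  have hzk : ∀ k, Complex.exp (Complex.I * ((p k : ℝ) : ℂ)) = z k := fun k => by rw [hzdef]
  -- nonzero basics
  have hq0 : q ≠ 0 := by rw [hqdef]; exact Complex.exp_ne_zero _
  have hg0 : g ≠ 0 := by rw [hgdef]; exact Complex.exp_ne_zero _
  have hh0 : ∀ k, hv k ≠ 0 := fun k => by rw [← hhk k]; exact Complex.exp_ne_zero _
  have hz0 : ∀ k, z k ≠ 0 := fun k => by rw [← hzk k]; exact Complex.exp_ne_zero _
  have hqim : q.im ≠ 0 := by
    have h1 : q = Complex.exp (((mu t : ℝ) : ℂ) * Complex.I) := by rw [hqdef, hm, mul_comm]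
    rw [h1, Complex.exp_ofReal_mul_I_im]
    exact ne_of_gt (Real.sin_pos_of_pos_of_lt_pi hmu0 hmupi)
  have hq1ne : q - 1 ≠ 0 := fun hc => hqim (by
    have : q = 1 := by linear_combination hc
    rw [this]; simp)
  have hqp1ne : q + 1 ≠ 0 := fun hc => hqim (by
    have : q = -1 := by linear_combination hc
    rw [this]; simp)
  have hqsq : q ^ 2 - 1 ≠ 0 := by
    intro hc
    rcases mul_eq_zero.mp (show (q - 1) * (q + 1) = 0 by linear_combination hc) with hc2 | hc2
    · exact hq1ne hc2
    · exact hqp1ne hc2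
  have h2I : (2 : ℂ) * Complex.I ≠ 0 := mul_ne_zero two_ne_zero Complex.I_ne_zero
  -- admissibility
  have H : ∀ k, z k = (q - E k) / (q * E k - 1) := by
    intro k
    have H0 := hadm k
    unfold Admissible at H0
    rw [Complex.exp_add, ← hm, ← hqdef, hEk k, hzk k] at H0
    exact H0
  have hqE : ∀ k, q * E k - 1 ≠ 0 := fun k hcon => hz0 k (by rw [H k, hcon, div_zero])
  have hzrel : ∀ k, z k * (q * E k - 1) = q - E k := fun k => by
    rw [H k, div_mul_cancel₀ _ (hqE k)]
  have hqmE : ∀ k, q - E k ≠ 0 := fun k => by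
    rw [← hzrel k]; exact mul_ne_zero (hz0 k) (hqE k)
  have hqz1 : ∀ k, q * z k + 1 ≠ 0 := by
    intro k hcon
    exact hqsq (by linear_combination (-q) * hzrel k + (q * E k - 1) * hcon)
  have hEval : ∀ k, E k = (q + z k) / (q * z k + 1) := by
    intro k
    rw [eq_div_iff (hqz1 k)]
    linear_combination hzrel k
  -- Delta in terms of q
  have hDel : ((Del t : ℝ) : ℂ) = -(q ^ 2 + 1) / (2 * q) := by
    have hc1 : Complex.cos m = ((-(Del t) : ℝ) : ℂ) := by
      rw [hm, ← Complex.ofReal_cos, hcosmu]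
    have hc2 : Complex.cos m = (q + q⁻¹) / 2 := by
      rw [Complex.cos, mul_comm m Complex.I, show -m * Complex.I = -(Complex.I * m) by ring,
        Complex.exp_neg, ← hqdef]
    rw [hc1] at hc2
    rw [eq_div_iff (mul_ne_zero two_ne_zero hq0)]
    have hq0' : q ≠ 0 := hq0
    field_simp at hc2
    push_cast at hc2 ⊢
    linear_combination -hc2
  have hDel2 : ((Del t : ℝ) : ℂ) * (2 * q) = -(q ^ 2 + 1) := by
    rw [hDel, div_mul_cancel₀ _ (mul_ne_zero two_ne_zero hq0)]
  -- inverse exp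
  have hw : ∀ k, Complex.exp (-(Complex.I * ((p k : ℝ) : ℂ))) = (z k)⁻¹ := fun k => by
    rw [Complex.exp_neg, hzk k]
  have hzinv : ∀ k, (z k)⁻¹ = (q * E k - 1) / (q - E k) := by
    intro k
    rw [eq_div_iff (hqmE k), ← hzrel k]
    rw [inv_mul_cancel_left₀ (hz0 k)]
  -- the star identity
  have hstar : ∀ a b : Fin n,
      q * (q - E a) * (q * E b - 1) * ((z a)⁻¹ + z b - 2 * ((Del t : ℝ) : ℂ)) =
        (q ^ 2 - 1) * (q ^ 2 * E b - E a) := by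
    intro a b
    have hinv : (z a)⁻¹ * z a = 1 := inv_mul_cancel₀ (hz0 a)
    linear_combination
      (-(q * (q * E b - 1) * ((z a)⁻¹ + z b - 2 * ((Del t : ℝ) : ℂ))) + q * (q - E b) +
        (q ^ 2 + 1) * (q * E b - 1)) * hzrel a +
      (q * z a * (q * E a - 1)) * hzrel b +
      (q * (q * E a - 1) * (q * E b - 1)) * hinv +
      (-(z a * (q * E a - 1) * (q * E b - 1))) * hDel2
  have hD0 : ∀ a b : Fin n, (z a)⁻¹ + z b - 2 * ((Del t : ℝ) : ℂ) ≠ 0 := by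
    intro a b
    have h1 := hBethe.1 b a
    rw [hw a, hzk b] at h1
    exact h1
  have hF : ∀ a b : Fin n, q ^ 2 * E b - E a ≠ 0 := by
    intro a b hc
    have h1 := hstar a b
    rw [hc, mul_zero] at h1
    exact (mul_ne_zero (mul_ne_zero (mul_ne_zero hq0 (hqmE a)) (hqE b)) (hD0 a b)) h1
  -- injectivity of E
  have hEne : ∀ k, k ≠ j → E k ≠ E j := by
    intro k hkj hEq
    have hzeq : z k = z j := by
      have h1 := hzrel k
      have h2 := hzrel j
      rw [hEq] at h1
      exact mul_right_cancel₀ (hqE j) (h1.trans h2.symm)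
    rw [← hzk k, ← hzk j] at hzeq
    obtain ⟨nn, hnn⟩ := Complex.exp_eq_exp_iff_exists_int.mp hzeq
    have h3 : ((p k : ℝ) : ℂ) = ((p j : ℝ) : ℂ) + (nn : ℂ) * (2 * ((Real.pi : ℝ) : ℂ)) := by
      apply mul_left_cancel₀ Complex.I_ne_zero
      rw [hnn]; push_cast; ring
    have h4 : (p k : ℝ) = p j + (nn : ℝ) * (2 * Real.pi) := by exact_mod_cast h3
    obtain ⟨hk1, hk2⟩ := hI k
    obtain ⟨hj1, hj2⟩ := hI j
    have hpi : 0 < Real.pi := Real.pi_pos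
    have h5 : |(nn : ℝ)| < 1 := by
      rw [abs_lt]; constructor <;> nlinarith
    have h6 : nn = 0 := by
      have h5' : |nn| < 1 := by exact_mod_cast h5
      have h7 := abs_lt.mp h5'
      omega
    rw [h6] at h4
    simp at h4
    exact hkj (hmono.injective h4)
  -- sin formulas
  have hs0 : Complex.sin (m / 2) * (2 * Complex.I * g) = q - 1 := by
    have e := sinExp (m / 2) (Complex.I * m / 2)
    rw [show Complex.I * m / 2 + m / 2 * Complex.I = Complex.I * m by ring,
      show Complex.I * m / 2 - m / 2 * Complex.I = 0 by ring,
      Complex.exp_zero, ← hqdef, ← hgdef] at e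
    linear_combination e
  have hsA : ∀ k, Complex.sin (m - x k) * (2 * Complex.I * (g * hv k)) = q * E k - 1 := by
    intro k
    have e := sinExp (m - x k) (Complex.I * m / 2 + (α k : ℂ) / 2)
    rw [show Complex.I * m / 2 + (α k : ℂ) / 2 + (m - x k) * Complex.I
          = Complex.I * m + (α k : ℂ) by
        rw [hx k]; linear_combination (-((α k : ℂ) / 2)) * Complex.I_mul_I,
      show Complex.I * m / 2 + (α k : ℂ) / 2 - (m - x k) * Complex.I = 0 by
        rw [hx k]; linear_combination ((α k : ℂ) / 2) * Complex.I_mul_I] at e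
    simp only [Complex.exp_add] at e
    rw [Complex.exp_zero, ← hqdef, ← hgdef, hEk k, hhk k] at e
    linear_combination e
  have hsB : ∀ k, Complex.sin (x k) * (2 * Complex.I * (g * hv k)) = q - E k := by
    intro k
    have e := sinExp (x k) (Complex.I * m / 2 + (α k : ℂ) / 2)
    rw [show Complex.I * m / 2 + (α k : ℂ) / 2 + x k * Complex.I = Complex.I * m by
        rw [hx k]; linear_combination ((α k : ℂ) / 2) * Complex.I_mul_I,
      show Complex.I * m / 2 + (α k : ℂ) / 2 - x k * Complex.I = (α k : ℂ) by
        rw [hx k]; linear_combination (-((α k : ℂ) / 2)) * Complex.I_mul_I] at e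
    simp only [Complex.exp_add] at e
    rw [← hqdef, ← hgdef, hEk k, hhk k] at e
    linear_combination e
  have hsAd : ∀ k l, Complex.sin (m - (x k - x l)) * (2 * Complex.I * (q * (hv k * hv l)))
      = q ^ 2 * E k - E l := by
    intro k l
    have e := sinExp (m - (x k - x l)) (Complex.I * m + ((α k : ℂ) / 2 + (α l : ℂ) / 2))
    rw [show Complex.I * m + ((α k : ℂ) / 2 + (α l : ℂ) / 2) + (m - (x k - x l)) * Complex.I
          = Complex.I * m + Complex.I * m + (α k : ℂ) by
        rw [hx k, hx l]
        linear_combination (-(((α k : ℂ) - (α l : ℂ)) / 2)) * Complex.I_mul_I,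
      show Complex.I * m + ((α k : ℂ) / 2 + (α l : ℂ) / 2) - (m - (x k - x l)) * Complex.I
          = (α l : ℂ) by
        rw [hx k, hx l]
        linear_combination (((α k : ℂ) - (α l : ℂ)) / 2) * Complex.I_mul_I] at e
    simp only [Complex.exp_add] at e
    rw [← hqdef, hEk k, hEk l, hhk k, hhk l] at e
    linear_combination e
  have hsBd : ∀ k l, Complex.sin (x k - x l) * (2 * Complex.I * (hv k * hv l))
      = E l - E k := by
    intro k l
    have e := sinExp (x k - x l) ((α k : ℂ) / 2 + (α l : ℂ) / 2)
    rw [show (α k : ℂ) / 2 + (α l : ℂ) / 2 + (x k - x l) * Complex.I = (α l : ℂ) by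
        rw [hx k, hx l]
        linear_combination (((α k : ℂ) - (α l : ℂ)) / 2) * Complex.I_mul_I,
      show (α k : ℂ) / 2 + (α l : ℂ) / 2 - (x k - x l) * Complex.I = (α k : ℂ) by
        rw [hx k, hx l]
        linear_combination (-(((α k : ℂ) - (α l : ℂ)) / 2)) * Complex.I_mul_I] at e
    simp only [Complex.exp_add] at e
    rw [hhk k, hhk l, hEk k, hEk l] at e
    linear_combination e
  have hs0ne : Complex.sin (m / 2) ≠ 0 := by
    intro hcon
    apply hq1ne
    rw [← hs0, hcon, zero_mul]
  -- ratio and power formulas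
  have hratioGen : ∀ k l, E l - E k ≠ 0 →
      Complex.sin (m - (x k - x l)) / Complex.sin (m / 2) /
        (Complex.sin (x k - x l) / Complex.sin (m / 2)) =
      (q ^ 2 * E k - E l) / (q * (E l - E k)) := by
    intro k l hEl
    have hmul2 : (2 : ℂ) * Complex.I * (hv k * hv l) ≠ 0 :=
      mul_ne_zero h2I (mul_ne_zero (hh0 k) (hh0 l))
    have hmul3 : (2 : ℂ) * Complex.I * (q * (hv k * hv l)) ≠ 0 :=
      mul_ne_zero h2I (mul_ne_zero hq0 (mul_ne_zero (hh0 k) (hh0 l)))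
    have e1 : Complex.sin (m - (x k - x l))
        = (q ^ 2 * E k - E l) / (2 * Complex.I * (q * (hv k * hv l))) := by
      rw [eq_div_iff hmul3]; exact hsAd k l
    have e2 : Complex.sin (x k - x l) = (E l - E k) / (2 * Complex.I * (hv k * hv l)) := by
      rw [eq_div_iff hmul2]; exact hsBd k l
    rw [div_div_div_comm, div_self hs0ne, div_one, e1, e2, div_div_div_comm]
    rw [show (2 : ℂ) * Complex.I * (q * (hv k * hv l))
        = q * (2 * Complex.I * (hv k * hv l)) by ring,
      mul_div_assoc, div_self hmul2, mul_one, div_div, mul_comm (E l - E k) q]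
  have h2Ig : (2 : ℂ) * Complex.I * g ≠ 0 := mul_ne_zero h2I hg0
  have haGj : Complex.sin (m - x j) / Complex.sin (m / 2)
      = (q * E j - 1) / (hv j * (q - 1)) := by
    have e1 : Complex.sin (m - x j) = (q * E j - 1) / (2 * Complex.I * (g * hv j)) := by
      rw [eq_div_iff (mul_ne_zero h2I (mul_ne_zero hg0 (hh0 j)))]; exact hsA j
    have e0 : Complex.sin (m / 2) = (q - 1) / (2 * Complex.I * g) := by
      rw [eq_div_iff h2Ig]; exact hs0
    rw [e1, e0, div_div_div_comm,
      show (2 : ℂ) * Complex.I * (g * hv j) = hv j * (2 * Complex.I * g) by ring,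
      mul_div_assoc, div_self h2Ig, mul_one, div_div, mul_comm (q - 1) (hv j)]
  have hbGj : Complex.sin (x j) / Complex.sin (m / 2)
      = (q - E j) / (hv j * (q - 1)) := by
    have e1 : Complex.sin (x j) = (q - E j) / (2 * Complex.I * (g * hv j)) := by
      rw [eq_div_iff (mul_ne_zero h2I (mul_ne_zero hg0 (hh0 j)))]; exact hsB j
    have e0 : Complex.sin (m / 2) = (q - 1) / (2 * Complex.I * g) := by
      rw [eq_div_iff h2Ig]; exact hs0
    rw [e1, e0, div_div_div_comm,
      show (2 : ℂ) * Complex.I * (g * hv j) = hv j * (2 * Complex.I * g) by ring,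
      mul_div_assoc, div_self h2Ig, mul_one, div_div, mul_comm (q - 1) (hv j)]
  -- D in divided form
  have hDdiv : ∀ a b : Fin n, (z a)⁻¹ + z b - 2 * ((Del t : ℝ) : ℂ)
      = (q ^ 2 - 1) * (q ^ 2 * E b - E a) / (q * ((q - E a) * (q * E b - 1))) := by
    intro a b
    rw [eq_div_iff (mul_ne_zero hq0 (mul_ne_zero (hqmE a) (hqE b)))]
    linear_combination hstar a b
  -- per-k Bethe factor
  have hfac : ∀ k : Fin n,
      Complex.exp (Complex.I * (((p j : ℝ) : ℂ) - ((p k : ℝ) : ℂ))) *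
          (Complex.exp (-(Complex.I * ((p j : ℝ) : ℂ))) +
            Complex.exp (Complex.I * ((p k : ℝ) : ℂ)) - 2 * ((Del t : ℝ) : ℂ)) /
          (Complex.exp (-(Complex.I * ((p k : ℝ) : ℂ))) +
            Complex.exp (Complex.I * ((p j : ℝ) : ℂ)) - 2 * ((Del t : ℝ) : ℂ))
        = (q ^ 2 * E k - E j) / (q ^ 2 * E j - E k) := by
    intro k
    have hinvk : (z k)⁻¹ * z k = 1 := inv_mul_cancel₀ (hz0 k)
    have hM : q * (q * E j - 1) * (q - E k) ≠ 0 :=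
      mul_ne_zero (mul_ne_zero hq0 (hqE j)) (hqmE k)
    have keyM : q * (q * E j - 1) * (q - E k) *
        ((z j * (z k)⁻¹ * ((z j)⁻¹ + z k - 2 * ((Del t : ℝ) : ℂ))) * (q ^ 2 * E j - E k)) =
        q * (q * E j - 1) * (q - E k) *
        ((q ^ 2 * E k - E j) * ((z k)⁻¹ + z j - 2 * ((Del t : ℝ) : ℂ))) := by
      linear_combination
        (q * (q - E k) * (z k)⁻¹ * ((z j)⁻¹ + z k - 2 * ((Del t : ℝ) : ℂ)) *
          (q ^ 2 * E j - E k)) * hzrel j +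
        (-(q * (q - E j) * ((z j)⁻¹ + z k - 2 * ((Del t : ℝ) : ℂ)) * (q ^ 2 * E j - E k) *
          (z k)⁻¹)) * hzrel k +
        (q * (q - E j) * ((z j)⁻¹ + z k - 2 * ((Del t : ℝ) : ℂ)) * (q ^ 2 * E j - E k) *
          (q * E k - 1)) * hinvk +
        (q ^ 2 * E j - E k) * hstar j k + (-(q ^ 2 * E k - E j)) * hstar k j
    have key := mul_left_cancel₀ hM keyM
    rw [show Complex.I * (((p j : ℝ) : ℂ) - ((p k : ℝ) : ℂ))
        = Complex.I * ((p j : ℝ) : ℂ) + -(Complex.I * ((p k : ℝ) : ℂ)) by ring,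
      Complex.exp_add, hzk j, hzk k, hw j, hw k]
    rw [div_eq_div_iff (hD0 k j) (hF k j)]
    linear_combination key
  -- the Bethe product identity
  have hzN : z j ^ N = (-1 : ℂ) ^ (n + 1) *
      ∏ k ∈ Finset.univ.erase j, ((q ^ 2 * E k - E j) / (q ^ 2 * E j - E k)) := by
    have hB := hBethe.2 j
    rw [show Complex.I * (N : ℂ) * ((p j : ℝ) : ℂ)
        = (N : ℂ) * (Complex.I * ((p j : ℝ) : ℂ)) by ring,
      Complex.exp_nat_mul, hzk j] at hB
    rw [Finset.prod_congr rfl (fun k _ => hfac k)] at hB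
    rw [← Finset.mul_prod_erase Finset.univ _ (Finset.mem_univ j),
      div_self (hF j j), one_mul] at hB
    exact hB
  -- rewrite the goal
  have hEjk : ∀ k, k ∈ Finset.univ.erase j → E j - E k ≠ 0 := fun k hk =>
    sub_ne_zero_of_ne (Ne.symm (hEne k (Finset.ne_of_mem_erase hk)))
  have hEkj : ∀ k, k ∈ Finset.univ.erase j → E k - E j ≠ 0 := fun k hk =>
    sub_ne_zero_of_ne (hEne k (Finset.ne_of_mem_erase hk))
  rw [Finset.prod_congr rfl (fun k hk => hratioGen k j (hEjk k hk)),
    Finset.prod_congr rfl (fun k hk => hratioGen j k (hEkj k hk)),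
    haGj, hbGj]
  have hBj : (q - E j) / (hv j * (q - 1)) = z j * ((q * E j - 1) / (hv j * (q - 1))) := by
    rw [← hzrel j]; ring
  rw [hBj, mul_pow, hzN]
  have hcore : (∏ k ∈ Finset.univ.erase j, ((q ^ 2 * E k - E j) / (q * (E j - E k))))
      = (-1 : ℂ) ^ (n + 1) *
        (∏ k ∈ Finset.univ.erase j, ((q ^ 2 * E k - E j) / (q ^ 2 * E j - E k))) *
        ∏ k ∈ Finset.univ.erase j, ((q ^ 2 * E j - E k) / (q * (E k - E j))) := by
    rw [mul_assoc, ← Finset.prod_mul_distrib]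
    have hstep : (∏ k ∈ Finset.univ.erase j,
        ((q ^ 2 * E k - E j) / (q ^ 2 * E j - E k) * ((q ^ 2 * E j - E k) / (q * (E k - E j)))))
        = ∏ k ∈ Finset.univ.erase j, (-((q ^ 2 * E k - E j) / (q * (E j - E k)))) := by
      refine Finset.prod_congr rfl fun k hk => ?_
      have hG : q ^ 2 * E j - E k ≠ 0 := hF k j
      have hW : E j - E k ≠ 0 := hEjk k hk
      have hW' : E k - E j ≠ 0 := hEkj k hk
      field_simp
      ring
    rw [hstep, prodNeg, Finset.card_erase_of_mem (Finset.mem_univ j),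
      Finset.card_univ, Fintype.card_fin]
    have hpow1 : (-1 : ℂ) ^ (n + 1) * (-1 : ℂ) ^ (n - 1) = 1 := by
      rw [← pow_add, show n + 1 + (n - 1) = 2 * n by have := j.pos; omega, pow_mul]
      norm_num
    rw [← mul_assoc, hpow1, one_mul]
  rw [hcore]
  ring
end

section
/- Let t ∈ (0,2), N ≥ 1, n ≤ N, and let p₁ < ⋯ < p_n in I_t, all nonzero, each p_j admitting an admissible parameter α_j (set x_j = μ_t/2 + i·α_j/2), and suppose (p₁,…,p_n) satisfies the exponential Bethe equations for (t,n,N). Then a_t(μ_t/2)^N · ∏_{k=1}^n a_t(x_k − μ_t/2)/b_t(x_k − μ_t/2) + b_t(μ_t/2)^N · ∏_{k=1}^n a_t(μ_t/2 − x_k)/b_t(μ_t/2 − x_k) = ∏_{k=1}^n L_t(e^{i p_k}) + ∏_{k=1}^n M_t(e^{i p_k}). -/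
open Matrix Complex Finset

section AuxProof
open Complex

lemma keyM (u v T : ℂ) (hu : u ≠ 0) (hv : v ≠ 0) (hv1 : v*v ≠ 1) (hu1 : u*u ≠ -1)
    (h1 : u*u*(v*v) - 1 ≠ 0)
    (hT : T = 2 + u*u + (u*u)⁻¹) :
    (((u*u)⁻¹*v⁻¹ - u*u*v)*Complex.I/2) / ((v - v⁻¹)*Complex.I/2)
      = 1 - T/(1 - (u*u - v*v)/(u*u*(v*v) - 1)) := by
  have hd1 : (u*u + 1) ≠ 0 := by intro h; apply hu1; linear_combination h
  have hd2 : (v*v - 1) ≠ 0 := by intro h; apply hv1; linear_combination h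
  have hvv : v - v⁻¹ ≠ 0 := by
    intro h; apply hv1
    have h' : v*(v - v⁻¹) = 0 := by rw [h, mul_zero]
    rw [mul_sub, mul_inv_cancel₀ hv] at h'
    linear_combination h'
  have hB : (v - v⁻¹)*Complex.I/2 ≠ 0 :=
    div_ne_zero (mul_ne_zero hvv Complex.I_ne_zero) two_ne_zero
  have hden : u*u*(v*v-1) ≠ 0 := mul_ne_zero (mul_ne_zero hu hu) hd2
  have hE : 1 - (u*u - v*v)/(u*u*(v*v) - 1) = (u*u+1)*(v*v-1)/(u*u*(v*v)-1) := by
    rw [one_sub_div h1]; ring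
  have hR : 1 - T/((u*u+1)*(v*v-1)/(u*u*(v*v)-1))
      = (1 - u*u*(u*u)*(v*v))/(u*u*(v*v-1)) := by
    rw [hT, div_div_eq_mul_div, one_sub_div (mul_ne_zero hd1 hd2), div_eq_div_iff (mul_ne_zero hd1 hd2) hden]
    field_simp
    ring
  rw [hE, hR, div_eq_div_iff hB hden]
  field_simp

lemma keyL (u v T : ℂ) (hu : u ≠ 0) (hv : v ≠ 0) (hv1 : v*v ≠ 1) (hu1 : u*u ≠ -1)
    (h1 : u*u*(v*v) - 1 ≠ 0)
    (hT : T = 2 + u*u + (u*u)⁻¹) :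
    (((u*u)⁻¹*v - u*u*v⁻¹)*Complex.I/2) / ((v⁻¹ - v)*Complex.I/2)
      = 1 + T*((u*u - v*v)/(u*u*(v*v) - 1))/(1 - (u*u - v*v)/(u*u*(v*v) - 1)) := by
  have hd1 : (u*u + 1) ≠ 0 := by intro h; apply hu1; linear_combination h
  have hd2 : (v*v - 1) ≠ 0 := by intro h; apply hv1; linear_combination h
  have hvv : v⁻¹ - v ≠ 0 := by
    intro h; apply hv1
    have h' : v*(v⁻¹ - v) = 0 := by rw [h, mul_zero]
    rw [mul_sub, mul_inv_cancel₀ hv] at h'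
    linear_combination -h'
  have hB : (v⁻¹ - v)*Complex.I/2 ≠ 0 :=
    div_ne_zero (mul_ne_zero hvv Complex.I_ne_zero) two_ne_zero
  have hden : u*u*(1 - v*v) ≠ 0 := by
    apply mul_ne_zero (mul_ne_zero hu hu)
    intro h; apply hd2; linear_combination -h
  have hE : 1 - (u*u - v*v)/(u*u*(v*v) - 1) = (u*u+1)*(v*v-1)/(u*u*(v*v)-1) := by
    rw [one_sub_div h1]; ring
  have hR : 1 + T*((u*u - v*v)/(u*u*(v*v) - 1))/((u*u+1)*(v*v-1)/(u*u*(v*v)-1))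
      = (v*v - u*u*(u*u))/(u*u*(1 - v*v)) := by
    rw [hT, ← mul_div_assoc, div_div_div_comm, div_self h1, div_one, one_add_div (mul_ne_zero hd1 hd2), div_eq_div_iff (mul_ne_zero hd1 hd2) hden]
    field_simp
    ring
  rw [hE, hR, div_eq_div_iff hB hden]
  field_simp

lemma identification_factor (t : ℝ) (ht : t ∈ Set.Ioo (0 : ℝ) 2) (pk αk : ℝ)
    (hIpk : pk ∈ Set.Ioo (-(Real.pi - mu t)) (Real.pi - mu t)) (hnepk : pk ≠ 0)
    (hadm : Admissible t pk αk) :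
    Complex.sin ((mu t : ℂ) - Complex.I * (αk : ℂ) / 2) /
        Complex.sin (Complex.I * (αk : ℂ) / 2) =
      Mf t (Complex.exp (Complex.I * (pk : ℂ))) ∧
    Complex.sin ((mu t : ℂ) + Complex.I * (αk : ℂ) / 2) /
        Complex.sin (-(Complex.I * (αk : ℂ) / 2)) =
      Lf t (Complex.exp (Complex.I * (pk : ℂ))) := by
  obtain ⟨ht0, ht2⟩ := ht
  have hDel1 : -(Del t) < 1 := by unfold Del; nlinarith
  have hDelm : (-1 : ℝ) < -(Del t) := by unfold Del; nlinarith
  have hmu0 : 0 < mu t := Real.arccos_pos.2 hDel1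
  have hcos : Real.cos (mu t) = -(Del t) :=
    Real.cos_arccos (le_of_lt hDelm) (le_of_lt hDel1)
  have hmupi : mu t < Real.pi := by
    rcases lt_or_eq_of_le (Real.arccos_le_pi (-(Del t))) with h | h
    · exact h
    · exfalso
      have : Real.cos (mu t) = -1 := by rw [mu, h, Real.cos_pi]
      rw [hcos] at this
      linarith
  have hsinpos : 0 < Real.sin (mu t) := Real.sin_pos_of_pos_of_lt_pi hmu0 hmupi
  set mC : ℂ := ((mu t : ℝ) : ℂ) with hmC
  set u : ℂ := Complex.exp (Complex.I * mC / 2) with hudef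
  have hu0 : u ≠ 0 := Complex.exp_ne_zero _
  have hu2 : u * u = Complex.exp (Complex.I * mC) := by
    rw [hudef, ← Complex.exp_add]; congr 1; ring
  have hexpI : Complex.exp (Complex.I * mC) =
      Complex.cos mC + Complex.sin mC * Complex.I := by
    rw [mul_comm Complex.I mC]; exact Complex.exp_mul_I mC
  have him : (Complex.exp (Complex.I * mC)).im = Real.sin (mu t) := by
    rw [hexpI, hmC]
    simp [← Complex.ofReal_cos, ← Complex.ofReal_sin]
  have hω1 : Complex.exp (Complex.I * mC) ≠ 1 := by
    intro h; rw [h] at him; simp at him; linarith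
  have hωm1 : u * u ≠ -1 := by
    rw [hu2]; intro h; rw [h] at him; simp at him; linarith
  have hu1 : u * u ≠ 1 := by rw [hu2]; exact hω1
  -- T relation
  have hTreal : t ^ 2 = 2 + 2 * Real.cos (mu t) := by rw [hcos]; unfold Del; ring
  have hcosE : Complex.cos mC =
      (Complex.exp (Complex.I * mC) + (Complex.exp (Complex.I * mC))⁻¹) / 2 := by
    rw [Complex.cos, neg_mul, Complex.exp_neg, mul_comm mC Complex.I]
  have hTuv : ((t : ℂ)) ^ 2 = 2 + u * u + (u * u)⁻¹ := by
    have h1 : ((t : ℂ)) ^ 2 = 2 + 2 * Complex.cos mC := by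
      rw [hmC, ← Complex.ofReal_cos]
      exact_mod_cast congrArg (fun r : ℝ => (r : ℂ)) hTreal
    rw [h1, hcosE, hu2]; ring
  -- v and admissibility
  set v : ℂ := Complex.exp ((αk : ℂ) / 2) with hvdef
  have hv0 : v ≠ 0 := Complex.exp_ne_zero _
  have hv2 : v * v = Complex.exp ((αk : ℂ)) := by
    rw [hvdef, ← Complex.exp_add]; congr 1; ring
  have hadm' : Complex.exp (Complex.I * (pk : ℂ)) =
      (u * u - v * v) / (u * u * (v * v) - 1) := by
    have hadm2 : Complex.exp (Complex.I * (pk : ℂ)) =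
        (Complex.exp (Complex.I * (mu t : ℂ)) - Complex.exp ((αk : ℂ))) /
          (Complex.exp (Complex.I * (mu t : ℂ) + (αk : ℂ)) - 1) := hadm
    rw [Complex.exp_add] at hadm2
    rw [hu2, hv2]
    exact hadm2
  have h1 : u * u * (v * v) - 1 ≠ 0 := by
    intro h; rw [h, div_zero] at hadm'
    exact Complex.exp_ne_zero _ hadm'
  have hv1 : v * v ≠ 1 := by
    intro h
    have hone : Complex.exp (Complex.I * (pk : ℂ)) = 1 := by
      rw [hadm', h, mul_one, div_self (sub_ne_zero.2 hu1)]
    rw [Complex.exp_eq_one_iff] at hone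
    obtain ⟨nn, hn⟩ := hone
    have hpk : (pk : ℂ) = (nn : ℂ) * (2 * (Real.pi : ℂ)) := by
      apply mul_left_cancel₀ Complex.I_ne_zero
      linear_combination hn
    have hpk' : pk = nn * (2 * Real.pi) := by exact_mod_cast hpk
    obtain ⟨hb1, hb2⟩ := hIpk
    have hpi := Real.pi_pos
    rcases lt_trichotomy nn 0 with hlt | heq | hgt
    · have hle' : nn ≤ -1 := by omega
      have hle : (nn : ℝ) ≤ -1 := by exact_mod_cast hle'
      nlinarith
    · exact hnepk (by rw [hpk', heq]; simp)
    · have hge' : 1 ≤ nn := by omega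
      have hge : (1 : ℝ) ≤ (nn : ℝ) := by exact_mod_cast hge'
      nlinarith
  -- sine computations
  have hsin1 : Complex.sin (Complex.I * (αk : ℂ) / 2) = (v - v⁻¹) * Complex.I / 2 := by
    rw [Complex.sin]
    have e1 : -(Complex.I * (αk : ℂ) / 2) * Complex.I = (αk : ℂ) / 2 := by
      linear_combination (-((αk : ℂ) / 2)) * Complex.I_sq
    have e2 : (Complex.I * (αk : ℂ) / 2) * Complex.I = -((αk : ℂ) / 2) := by
      linear_combination ((αk : ℂ) / 2) * Complex.I_sq
    rw [e1, e2, Complex.exp_neg, ← hvdef]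
  have hsin2 : Complex.sin (mC - Complex.I * (αk : ℂ) / 2) =
      ((u * u)⁻¹ * v⁻¹ - u * u * v) * Complex.I / 2 := by
    rw [Complex.sin]
    have e1 : -(mC - Complex.I * (αk : ℂ) / 2) * Complex.I =
        -(Complex.I * mC) + -((αk : ℂ) / 2) := by
      linear_combination ((αk : ℂ) / 2) * Complex.I_sq
    have e2 : (mC - Complex.I * (αk : ℂ) / 2) * Complex.I =
        Complex.I * mC + (αk : ℂ) / 2 := by
      linear_combination (-((αk : ℂ) / 2)) * Complex.I_sq
    rw [e1, e2, Complex.exp_add, Complex.exp_add, Complex.exp_neg, Complex.exp_neg,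
      ← hu2, ← hvdef]
  have hsin3 : Complex.sin (mC + Complex.I * (αk : ℂ) / 2) =
      ((u * u)⁻¹ * v - u * u * v⁻¹) * Complex.I / 2 := by
    rw [Complex.sin]
    have e1 : -(mC + Complex.I * (αk : ℂ) / 2) * Complex.I =
        -(Complex.I * mC) + (αk : ℂ) / 2 := by
      linear_combination (-((αk : ℂ) / 2)) * Complex.I_sq
    have e2 : (mC + Complex.I * (αk : ℂ) / 2) * Complex.I =
        Complex.I * mC + -((αk : ℂ) / 2) := by
      linear_combination ((αk : ℂ) / 2) * Complex.I_sq
    rw [e1, e2, Complex.exp_add, Complex.exp_add, Complex.exp_neg, Complex.exp_neg,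
      ← hu2, ← hvdef]
  have hsin4 : Complex.sin (-(Complex.I * (αk : ℂ) / 2)) = (v⁻¹ - v) * Complex.I / 2 := by
    rw [Complex.sin_neg, hsin1]; ring
  constructor
  · rw [hsin1, hsin2, Mf, hadm']
    exact keyM u v _ hu0 hv0 hv1 hωm1 h1 hTuv
  · rw [hsin3, hsin4, Lf, hadm']
    exact keyL u v _ hu0 hv0 hv1 hωm1 h1 hTuv

end AuxProof

theorem identification_values (t : ℝ) (ht : t ∈ Set.Ioo (0 : ℝ) 2) (N n : ℕ)
    (hN : 1 ≤ N) (hnN : n ≤ N) (p : Fin n → ℝ) (hmono : StrictMono p)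
    (hI : ∀ j, p j ∈ Set.Ioo (-(Real.pi - mu t)) (Real.pi - mu t))
    (hne : ∀ j, p j ≠ 0)
    (α : Fin n → ℝ) (hadm : ∀ j, Admissible t (p j) (α j))
    (x : Fin n → ℂ) (hx : ∀ j, x j = (mu t : ℂ) / 2 + Complex.I * (α j : ℂ) / 2)
    (hBethe : BetheExp t n N p) :
    aG (mu t) ((mu t : ℂ) / 2) ^ N *
        (∏ k : Fin n,
          aG (mu t) (x k - (mu t : ℂ) / 2) / bG (mu t) (x k - (mu t : ℂ) / 2)) +
      bG (mu t) ((mu t : ℂ) / 2) ^ N *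
        (∏ k : Fin n,
          aG (mu t) ((mu t : ℂ) / 2 - x k) / bG (mu t) ((mu t : ℂ) / 2 - x k)) =
      (∏ k : Fin n, Lf t (Complex.exp (Complex.I * (p k : ℂ)))) +
        ∏ k : Fin n, Mf t (Complex.exp (Complex.I * (p k : ℂ))) := by
  
  -- basic facts about mu t
  obtain ⟨ht0, ht2⟩ := ht
  have hDel1 : -(Del t) < 1 := by unfold Del; nlinarith
  have hDelm : (-1 : ℝ) < -(Del t) := by unfold Del; nlinarith
  have hmu0 : 0 < mu t := Real.arccos_pos.2 hDel1
  have hcos : Real.cos (mu t) = -(Del t) :=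
    Real.cos_arccos (le_of_lt hDelm) (le_of_lt hDel1)
  have hmupi : mu t < Real.pi := by
    rcases lt_or_eq_of_le (Real.arccos_le_pi (-(Del t))) with h | h
    · exact h
    · exfalso
      have : Real.cos (mu t) = -1 := by rw [mu, h, Real.cos_pi]
      rw [hcos] at this
      linarith
  have hS : Complex.sin ((mu t : ℂ) / 2) ≠ 0 := by
    have h2 : ((mu t : ℂ)) / 2 = ((mu t / 2 : ℝ) : ℂ) := by push_cast; ring
    rw [h2, ← Complex.ofReal_sin]
    have : 0 < Real.sin (mu t / 2) :=
      Real.sin_pos_of_pos_of_lt_pi (by linarith) (by linarith [Real.pi_pos])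
    exact_mod_cast ne_of_gt this
  have haG1 : aG (mu t) ((mu t : ℂ) / 2) = 1 := by
    rw [aG]
    have : (mu t : ℂ) - (mu t : ℂ) / 2 = (mu t : ℂ) / 2 := by ring
    rw [this, div_self hS]
  have hbG1 : bG (mu t) ((mu t : ℂ) / 2) = 1 := by
    rw [bG, div_self hS]
  rw [haG1, hbG1, one_pow, one_mul, one_mul]
  have hfac : ∀ k : Fin n,
      Complex.sin ((mu t : ℂ) - Complex.I * (α k : ℂ) / 2) /
          Complex.sin (Complex.I * (α k : ℂ) / 2) =
        Mf t (Complex.exp (Complex.I * (p k : ℂ))) ∧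
      Complex.sin ((mu t : ℂ) + Complex.I * (α k : ℂ) / 2) /
          Complex.sin (-(Complex.I * (α k : ℂ) / 2)) =
        Lf t (Complex.exp (Complex.I * (p k : ℂ))) := fun k =>
    identification_factor t ⟨ht0, ht2⟩ (p k) (α k) (hI k) (hne k) (hadm k)
  have hM : ∀ k : Fin n,
      aG (mu t) (x k - (mu t : ℂ) / 2) / bG (mu t) (x k - (mu t : ℂ) / 2) =
        Mf t (Complex.exp (Complex.I * (p k : ℂ))) := by
    intro k
    have harg : x k - (mu t : ℂ) / 2 = Complex.I * (α k : ℂ) / 2 := by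
      rw [hx k]; ring
    rw [aG, bG, harg, div_div_div_comm, div_self hS, div_one]
    have harg2 : (mu t : ℂ) - Complex.I * (α k : ℂ) / 2 =
        (mu t : ℂ) - Complex.I * (α k : ℂ) / 2 := rfl
    exact (hfac k).1
  have hL : ∀ k : Fin n,
      aG (mu t) ((mu t : ℂ) / 2 - x k) / bG (mu t) ((mu t : ℂ) / 2 - x k) =
        Lf t (Complex.exp (Complex.I * (p k : ℂ))) := by
    intro k
    have harg : (mu t : ℂ) / 2 - x k = -(Complex.I * (α k : ℂ) / 2) := by
      rw [hx k]; ring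
    have harg2 : (mu t : ℂ) - ((mu t : ℂ) / 2 - x k) =
        (mu t : ℂ) + Complex.I * (α k : ℂ) / 2 := by
      rw [hx k]; ring
    rw [aG, bG, harg2, harg, div_div_div_comm, div_self hS, div_one]
    exact (hfac k).2
  rw [Finset.prod_congr rfl (fun k _ => hM k), Finset.prod_congr rfl (fun k _ => hL k),
    add_comm]
end
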